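/- arXiv:1905.12328 — 13 statements merged into one kernel-verified Lean document; each statement's English description precedes it below -/
import Mathlib

section
/- Let A be a Lie triple algebra over a field of characteristic ≠ 2 with an idempotent e ≠ 0 and Peirce decomposition A = A_e(1) ⊕ A_e(1/2) ⊕ A_e(0). Then for every derivation d of A, d(e) ∈ A_e(1/2). -/
theorem IsIdempotentElem.map_eq_mul_add_mul {A : Type*} [NonUnitalNonAssocCommSemiring A]
    {e : A} (he : IsIdempotentElem e) (d : A → A) (hd : ∀ x y : A, d (x * y) = d x * y + x * d y) :
    d e = e * d e + e * d e := by
  conv_lhs => rw [← he.eq, hd, mul_comm (d e) e]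

theorem deriv_idempotent_half_general {K A : Type*} [Field K] [NonUnitalNonAssocCommRing A]
    [Module K A]
    (h2 : (2 : K) ≠ 0)
    (e : A) (hee : e * e = e)
    (d : A →ₗ[K] A) (hd : ∀ x y : A, d (x * y) = d x * y + x * d y) :
    e * d e = (2 : K)⁻¹ • d e := by
  rw [eq_inv_smul_iff₀ h2, two_smul, ← IsIdempotentElem.map_eq_mul_add_mul hee d hd]

/-- In a Lie triple algebra with nonzero idempotent e and Peirce decomposition
A = A_e(1) ⊕ A_e(1/2) ⊕ A_e(0), every derivation d satisfies d(e) ∈ A_e(1/2). -/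
theorem deriv_idempotent_half {K A : Type*} [Field K] [NonUnitalNonAssocCommRing A]
    [Module K A] [SMulCommClass K A A] [IsScalarTower K A A]
    (h2 : (2 : K) ≠ 0)
    (hLT : ∀ x y : A, 2 • (x * (x * (x * y))) + y * (x * (x * x)) = 3 • (x * (y * (x * x))))
    (e : A) (he : e ≠ 0) (hee : e * e = e)
    (hdecomp : ∀ x : A, ∃ x1 xh x0 : A,
      e * x1 = x1 ∧ e * xh = (2 : K)⁻¹ • xh ∧ e * x0 = 0 ∧ x = x1 + xh + x0)
    (d : A →ₗ[K] A) (hd : ∀ x y : A, d (x * y) = d x * y + x * d y) :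
    e * d e = (2 : K)⁻¹ • d e :=
  deriv_idempotent_half_general h2 e hee d hd
end

section
/- Let A be a Lie triple algebra with idempotent e ≠ 0 and Peirce decomposition A = A_e(1) ⊕ A_e(1/2) ⊕ A_e(0). For λ ∈ {0,1}, the set J_λ = {x ∈ A_e(λ) : x·A_e(1/2) = 0} is an ideal of A_e(λ), and J = J_0 ⊕ J_1 is an ideal of A that is invariant under every derivation of A. -/
/-!
For an idempotent `e` of a Lie triple algebra, the identity at `x = e` says that `L_e` is
annihilated by `2t³ - 3t² + t = t(2t - 1)(t - 1)`, so `A = A_e(1) ⊕ A_e(1/2) ⊕ A_e(0)`.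
Polarizing the identity once at `e` gives the Peirce multiplication rules, and polarizing it
fully at `(x, a, z; e)` gives `(xa)z = 0` for `x ∈ J_λ`, `a ∈ A_e(λ)`, `z ∈ A_e(1/2)`. As `x ∈ J_λ`
also kills `A_e(1/2)` and `A_e(1 - λ)`, each `J_λ` is an ideal of the whole of `A`.
A derivation `d` maps `e` into `A_e(1/2)` (as `d e = 2 e·d e`), hence maps `J_λ` into `A_e(λ)`,
and for `z ∈ A_e(1/2)` the product `(d x)z = -x(d z)` lies in `A_e(λ) ∩ A_e(1/2) = 0`.
-/

/-- x belongs to J_λ = {x ∈ A_e(λ) : x·A_e(1/2) = 0}. -/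
def memJ {K A : Type*} [Field K] [NonUnitalNonAssocCommRing A]
    [Module K A] (e x : A) (lam : K) : Prop :=
  e * x = lam • x ∧ ∀ z : A, e * z = (2 : K)⁻¹ • z → x * z = 0

def IsLieTripleAlgebra (A : Type*) [NonUnitalNonAssocCommRing A] : Prop :=
  ∀ x y : A, 2 • (x * (x * (x * y))) + y * (x * (x * x)) = 3 • (x * (y * (x * x)))

section
variable {K A : Type*} [Field K] [NonUnitalNonAssocCommRing A] [Module K A]

theorem eq_of_two_nsmul_eq_two_nsmul (h2 : (2 : K) ≠ 0) {a b : A} (h : 2 • a = 2 • b) :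
    a = b :=
  smul_right_injective A h2 (by simpa only [ofNat_smul_eq_nsmul] using h)

theorem eq_zero_of_mul_left_eq_smul_of_ne {e v : A} {α β : K} (hne : α ≠ β)
    (hα : e * v = α • v) (hβ : e * v = β • v) : v = 0 := by
  have h : (α - β) • v = 0 := by rw [sub_smul, ← hα, ← hβ, sub_self]
  exact (smul_eq_zero.mp h).resolve_left (sub_ne_zero.mpr hne)

theorem one_sub_two_mul_ne_zero {lam : K} (hlam : lam = 0 ∨ lam = 1) : 1 - 2 * lam ≠ 0 := by
  rcases hlam with rfl | rfl <;> norm_num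

theorem mul_map_idempotent_eq_half_smul (h2 : (2 : K) ≠ 0) {d : A → A}
    (hd : ∀ x y, d (x * y) = d x * y + x * d y) {e : A} (hee : e * e = e) :
    e * d e = (2 : K)⁻¹ • d e := by
  rw [eq_inv_smul_iff₀ h2, two_smul]
  conv_rhs => rw [← hee, hd, mul_comm (d e) e]

namespace IsLieTripleAlgebra

theorem polarization (h2 : (2 : K) ≠ 0) (hA : IsLieTripleAlgebra A) (p u y : A) :
    2 • (p * (p * (u * y)) + p * (u * (p * y)) + u * (p * (p * y)))
      + (y * (u * (p * p)) + y * (p * (u * p)) + y * (p * (p * u)))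
      = 3 • (u * (y * (p * p)) + p * (y * (u * p)) + p * (y * (p * u))) := by
  apply eq_of_two_nsmul_eq_two_nsmul h2
  linear_combination (norm := (simp only [mul_add, add_mul, mul_sub, sub_mul]; module))
    hA (p + u) y - hA (p - u) y - 2 • hA u y

theorem full_polarization (h2 : (2 : K) ≠ 0) (hA : IsLieTripleAlgebra A) (u v w y : A) :
    2 • (v * (w * (u * y)) + w * (v * (u * y)) + v * (u * (w * y)) + w * (u * (v * y))
        + u * (v * (w * y)) + u * (w * (v * y)))
      + (y * (u * (v * w)) + y * (u * (w * v)) + y * (v * (u * w)) + y * (w * (u * v))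
        + y * (v * (w * u)) + y * (w * (v * u)))
      = 3 • (u * (y * (v * w)) + u * (y * (w * v)) + v * (y * (u * w)) + w * (y * (u * v))
        + v * (y * (w * u)) + w * (y * (v * u))) := by
  linear_combination (norm := (simp only [mul_add, add_mul]; module))
    hA.polarization h2 (v + w) u y - hA.polarization h2 v u y - hA.polarization h2 w u y

theorem peirce_cubic (hA : IsLieTripleAlgebra A) {e : A} (hee : e * e = e) (y : A) :
    2 • (e * (e * (e * y))) + e * y = 3 • (e * (e * y)) := by
  simpa only [hee, mul_comm y e] using hA e y

theorem exists_peirce_decomposition (h2 : (2 : K) ≠ 0) (hA : IsLieTripleAlgebra A) {e : A}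
    (hee : e * e = e) (x : A) :
    ∃ x1 xh x0 : A, e * x1 = x1 ∧ e * xh = (2 : K)⁻¹ • xh ∧ e * x0 = 0 ∧ x = x1 + xh + x0 := by
  have hC := hA.peirce_cubic hee x
  -- the projections `L(2L - 1)`, `4L(1 - L)`, `(2L - 1)(L - 1)` with `L = L_e`
  refine ⟨2 • (e * (e * x)) - e * x, 4 • (e * x - e * (e * x)), x - 3 • (e * x) + 2 • (e * (e * x)),
    ?_, ?_, ?_, by abel⟩
  · simp only [mul_sub, mul_smul_comm]
    linear_combination (norm := module) hC
  · rw [eq_inv_smul_iff₀ h2]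
    simp only [mul_sub, mul_smul_comm]
    linear_combination (norm := module) (-4 : ℤ) • hC
  · simp only [mul_sub, mul_add, mul_smul_comm]
    linear_combination (norm := module) hC

variable [SMulCommClass K A A]

/-- Together with `peirce_cubic`, this quadratic relation for `L_e` on `u * y` determines the
Peirce space of `u * y`. -/
theorem peirce_quadratic (h2 : (2 : K) ≠ 0) (hA : IsLieTripleAlgebra A) {e u y : A}
    (hee : e * e = e) {α β : K} (hu : e * u = α • u) (hy : e * y = β • y) :
    (2 : K) • (e * (e * (u * y))) + (2 * β - 6 * α) • (e * (u * y))
      + (2 * β ^ 2 + 2 * α ^ 2 + α - 3 * β) • (u * y) = 0 := by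
  have h := hA.polarization h2 e u y
  simp only [hee, mul_comm u e, mul_comm y e, hu, hy, mul_comm y u, mul_smul_comm] at h
  linear_combination (norm := module) h

theorem mul_mem_peirce_self (h2 : (2 : K) ≠ 0) (hA : IsLieTripleAlgebra A) {e u y : A}
    (hee : e * e = e) {lam : K} (hlam : lam = 0 ∨ lam = 1) (hu : e * u = lam • u)
    (hy : e * y = lam • y) : e * (u * y) = lam • (u * y) := by
  have hQ := hA.peirce_quadratic h2 hee hu hy
  have hLQ := congrArg (e * ·) hQ
  simp only [mul_add, mul_smul_comm, mul_zero] at hLQ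
  have hC := hA.peirce_cubic hee (u * y)
  rcases hlam with rfl | rfl
  · linear_combination (norm := (match_scalars <;> field_simp <;> ring1))
      hC - hLQ + (3 * 2⁻¹ : K) • hQ
  · linear_combination (norm := (match_scalars <;> field_simp <;> ring1))
      hC - hLQ - (2⁻¹ : K) • hQ

theorem mul_mem_peirce_half (h2 : (2 : K) ≠ 0) (hA : IsLieTripleAlgebra A) {e u y : A}
    (hee : e * e = e) {lam : K} (hlam : lam = 0 ∨ lam = 1) (hu : e * u = lam • u)
    (hy : e * y = (2 : K)⁻¹ • y) : e * (u * y) = (2 : K)⁻¹ • (u * y) := by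
  have hQ := hA.peirce_quadratic h2 hee hu hy
  have hLQ := congrArg (e * ·) hQ
  simp only [mul_add, mul_smul_comm, mul_zero] at hLQ
  have hC := hA.peirce_cubic hee (u * y)
  rcases hlam with rfl | rfl
  · linear_combination (norm := (match_scalars <;> field_simp <;> ring1))
      (2⁻¹ * 2⁻¹ : K) • (hC - hLQ) + (2⁻¹ : K) • hQ
  · linear_combination (norm := (match_scalars <;> field_simp <;> ring1))
      (2⁻¹ * 2⁻¹ : K) • (hC - hLQ - hQ)

theorem peirce_one_mul_peirce_zero (h2 : (2 : K) ≠ 0) (hA : IsLieTripleAlgebra A) {e u y : A}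
    (hee : e * e = e) (hu : e * u = u) (hy : e * y = 0) : u * y = 0 := by
  have hu' : e * u = (1 : K) • u := by rw [one_smul, hu]
  have hy' : e * y = (0 : K) • y := by rw [zero_smul, hy]
  have hQ := hA.peirce_quadratic h2 hee hu' hy'
  have hQ' := hA.peirce_quadratic h2 hee hy' hu'
  rw [mul_comm y u] at hQ'
  have hLQ := congrArg (e * ·) (congrArg₂ (· - ·) hQ hQ')
  simp only [mul_add, mul_sub, mul_smul_comm, mul_zero, sub_zero] at hLQ
  linear_combination (norm := (match_scalars <;> field_simp <;> ring1))
    (3 * 2⁻¹ * 2⁻¹ : K) • hQ + (5 * 2⁻¹ * 2⁻¹ : K) • hQ' + (2⁻¹ : K) • hLQ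

theorem memJ_mul_of_mem_peirce (h2 : (2 : K) ≠ 0) (hA : IsLieTripleAlgebra A) {e x a : A} (hee : e * e = e)
    {lam : K} (hlam : lam = 0 ∨ lam = 1) (hx : memJ e x lam) (ha : e * a = lam • a) :
    memJ e (x * a) lam := by
  obtain ⟨hxe, hxJ⟩ := hx
  have hxa := hA.mul_mem_peirce_self h2 hee hlam hxe ha
  refine ⟨hxa, fun z hz => ?_⟩
  have haz := hA.mul_mem_peirce_half h2 hee hlam ha hz
  have hxaz := hA.mul_mem_peirce_half h2 hee hlam hxa hz
  -- all terms but multiples of `(x * a) * z` vanish, leaving `(1 - 2λ) • ((x * a) * z) = 0`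
  have hT := hA.full_polarization h2 x a z e
  simp only [mul_comm x e, mul_comm a e, mul_comm z e, mul_comm z a, mul_comm a x, mul_comm z x,
    mul_comm z (x * a), hxe, ha, hz, hxJ z hz, hxJ _ haz, hxa, haz, hxaz, mul_smul_comm,
    mul_zero, smul_zero, add_zero, zero_add] at hT
  have h : (1 - 2 * lam) • (x * a * z) = 0 := by
    linear_combination (norm := (match_scalars; field_simp; ring1)) hT
  exact (smul_eq_zero.mp h).resolve_left (one_sub_two_mul_ne_zero hlam)

theorem memJ_mul_right (h2 : (2 : K) ≠ 0) (hA : IsLieTripleAlgebra A) {e x : A}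
    (hee : e * e = e) {lam : K} (hlam : lam = 0 ∨ lam = 1) (hx : memJ e x lam) (y : A) :
    memJ e (x * y) lam := by
  obtain ⟨y1, yh, y0, h1, hh, h0, rfl⟩ := hA.exists_peirce_decomposition h2 hee y
  have hxh : x * yh = 0 := hx.2 yh hh
  rcases hlam with rfl | rfl
  · have hx1 : x * y1 = 0 := by
      rw [mul_comm]
      exact hA.peirce_one_mul_peirce_zero h2 hee h1 (by simpa using hx.1)
    rw [mul_add, mul_add, hx1, hxh, zero_add, zero_add]
    exact hA.memJ_mul_of_mem_peirce h2 hee (Or.inl rfl) hx (by rw [h0, zero_smul])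
  · have hx0 : x * y0 = 0 := hA.peirce_one_mul_peirce_zero h2 hee (by simpa using hx.1) h0
    rw [mul_add, mul_add, hx0, hxh, add_zero, add_zero]
    exact hA.memJ_mul_of_mem_peirce h2 hee (Or.inr rfl) hx (by rw [h1, one_smul])

theorem memJ_map_of_derivation (h2 : (2 : K) ≠ 0) (hA : IsLieTripleAlgebra A) {e x : A}
    (hee : e * e = e) {lam : K} (hlam : lam = 0 ∨ lam = 1) (d : A →ₗ[K] A)
    (hd : ∀ x y : A, d (x * y) = d x * y + x * d y) (hx : memJ e x lam) :
    memJ e (d x) lam := by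
  have hde : e * d e = (2 : K)⁻¹ • d e := mul_map_idempotent_eq_half_smul h2 hd hee
  have hdx : e * d x = lam • d x := by
    have h := hd e x
    rw [hx.1, map_smul, mul_comm (d e) x, hx.2 _ hde, zero_add] at h
    exact h.symm
  refine ⟨hdx, fun z hz => ?_⟩
  have hsum : d x * z + x * d z = 0 := by rw [← hd, hx.2 z hz, map_zero]
  have hhalf := hA.mul_mem_peirce_half h2 hee hlam hdx hz
  have hlam' : e * (d x * z) = lam • (d x * z) := by
    rw [eq_neg_of_add_eq_zero_left hsum, mul_neg, smul_neg,
      (hA.memJ_mul_right h2 hee hlam hx (d z)).1]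
  refine eq_zero_of_mul_left_eq_smul_of_ne (fun h => one_sub_two_mul_ne_zero hlam ?_) hlam' hhalf
  rw [h, mul_inv_cancel₀ h2, sub_self]

end IsLieTripleAlgebra
end

theorem J_characteristic_ideal_general {K A : Type*} [Field K] [NonUnitalNonAssocCommRing A]
    [Module K A] [SMulCommClass K A A]
    (h2 : (2 : K) ≠ 0)
    (hLT : ∀ x y : A, 2 • (x * (x * (x * y))) + y * (x * (x * x)) = 3 • (x * (y * (x * x))))
    (e : A) (hee : e * e = e) :
    (∀ lam : K, (lam = 0 ∨ lam = 1) →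
      ∀ x a : A, memJ e x lam → e * a = lam • a → memJ e (x * a) lam) ∧
    (∀ a x0 x1 : A, memJ e x0 (0 : K) → memJ e x1 (1 : K) →
      ∃ y0 y1 : A, memJ e y0 (0 : K) ∧ memJ e y1 (1 : K) ∧ a * (x0 + x1) = y0 + y1) ∧
    (∀ d : A →ₗ[K] A, (∀ x y : A, d (x * y) = d x * y + x * d y) →
      ∀ x0 x1 : A, memJ e x0 (0 : K) → memJ e x1 (1 : K) →
        ∃ y0 y1 : A, memJ e y0 (0 : K) ∧ memJ e y1 (1 : K) ∧ d (x0 + x1) = y0 + y1) := by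
  have hA : IsLieTripleAlgebra A := hLT
  refine ⟨fun lam hlam x a hx _ => hA.memJ_mul_right h2 hee hlam hx a, ?_, ?_⟩
  · intro a x0 x1 hx0 hx1
    refine ⟨x0 * a, x1 * a, hA.memJ_mul_right h2 hee (Or.inl rfl) hx0 a,
      hA.memJ_mul_right h2 hee (Or.inr rfl) hx1 a, ?_⟩
    rw [mul_add, mul_comm a x0, mul_comm a x1]
  · intro d hd x0 x1 hx0 hx1
    exact ⟨d x0, d x1, hA.memJ_map_of_derivation h2 hee (Or.inl rfl) d hd hx0,
      hA.memJ_map_of_derivation h2 hee (Or.inr rfl) d hd hx1, map_add d x0 x1⟩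

/-- For a Lie triple algebra with nonzero idempotent e:
J_λ is an ideal of A_e(λ) for λ ∈ {0,1}, J = J_0 ⊕ J_1 is an ideal of A, and
J is invariant under every derivation of A. -/
theorem J_characteristic_ideal {K A : Type*} [Field K] [NonUnitalNonAssocCommRing A]
    [Module K A] [SMulCommClass K A A] [IsScalarTower K A A]
    (h2 : (2 : K) ≠ 0)
    (hLT : ∀ x y : A, 2 • (x * (x * (x * y))) + y * (x * (x * x)) = 3 • (x * (y * (x * x))))
    (e : A) (he : e ≠ 0) (hee : e * e = e)
    (hdecomp : ∀ x : A, ∃ x1 xh x0 : A,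
      e * x1 = x1 ∧ e * xh = (2 : K)⁻¹ • xh ∧ e * x0 = 0 ∧ x = x1 + xh + x0) :
    (∀ lam : K, (lam = 0 ∨ lam = 1) →
      ∀ x a : A, memJ e x lam → e * a = lam • a → memJ e (x * a) lam) ∧
    (∀ a x0 x1 : A, memJ e x0 (0 : K) → memJ e x1 (1 : K) →
      ∃ y0 y1 : A, memJ e y0 (0 : K) ∧ memJ e y1 (1 : K) ∧ a * (x0 + x1) = y0 + y1) ∧
    (∀ d : A →ₗ[K] A, (∀ x y : A, d (x * y) = d x * y + x * d y) →
      ∀ x0 x1 : A, memJ e x0 (0 : K) → memJ e x1 (1 : K) →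
        ∃ y0 y1 : A, memJ e y0 (0 : K) ∧ memJ e y1 (1 : K) ∧ d (x0 + x1) = y0 + y1) :=
  J_characteristic_ideal_general h2 hLT e hee
end

section
/- The gametic diploid algebra G(n+1, 2), the commutative algebra of dimension n+1 over a field K of characteristic ≠ 2 with basis {a_0,…,a_n} and products a_i a_j = ½a_i + ½a_j, is dimensionally nilpotent: it admits a derivation d with d^{n+1} = 0 and d^n ≠ 0. -/
/-!
Let `ω` be the linear form equal to `1` on every `a i`. The product of `G(n+1, 2)` is
`x y = ½ (ω x • y + ω y • x)`, so every linear map `d` with `ω ∘ d = 0` is a derivation: the terms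
`ω (d x)`, `ω (d y)` vanish and what remains is `d` applied to the product. In the basis
`e 0 = a 0`, `e i = a 0 - a i` we have `ω (e i) = 0` for `i ≠ 0`, so the shift
`e i ↦ e (i + 1)`, `e n ↦ 0` is such a map, and it is nilpotent of index exactly `n + 1`.
-/

open Module

namespace Module.Basis

section Shift

variable {R M : Type*} [CommSemiring R] [AddCommMonoid M] [Module R M] {n : ℕ}

noncomputable def extendByZero (e : Basis (Fin (n + 1)) R M) (k : ℕ) : M :=
  if h : k < n + 1 then e ⟨k, h⟩ else 0

noncomputable def shift (e : Basis (Fin (n + 1)) R M) : Module.End R M :=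
  e.constr R fun i => e.extendByZero (i + 1)

variable (e : Basis (Fin (n + 1)) R M)

theorem extendByZero_val (i : Fin (n + 1)) : e.extendByZero i = e i :=
  dif_pos i.isLt

theorem extendByZero_of_le {k : ℕ} (hk : n + 1 ≤ k) : e.extendByZero k = 0 :=
  dif_neg (by omega)

theorem shift_extendByZero (k : ℕ) : e.shift (e.extendByZero k) = e.extendByZero (k + 1) := by
  by_cases hk : k < n + 1
  · rw [show k = (⟨k, hk⟩ : Fin (n + 1)) from rfl, e.extendByZero_val]
    exact e.constr_basis R _ _
  · rw [e.extendByZero_of_le (by omega), e.extendByZero_of_le (by omega), map_zero]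

theorem shift_pow_extendByZero (j k : ℕ) :
    (e.shift ^ j) (e.extendByZero k) = e.extendByZero (k + j) := by
  induction j with
  | zero => rfl
  | succ j ih => rw [pow_succ', Module.End.mul_apply, ih, shift_extendByZero, add_assoc]

theorem shift_pow_succ_eq_zero : e.shift ^ (n + 1) = 0 :=
  e.ext fun i => by
    rw [← e.extendByZero_val, shift_pow_extendByZero, e.extendByZero_of_le (by omega),
      LinearMap.zero_apply]

theorem shift_pow_ne_zero [Nontrivial R] : e.shift ^ n ≠ 0 := fun h => by
  have := e.shift_pow_extendByZero n 0
  rw [h, zero_add] at this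
  exact e.ne_zero (Fin.last n) ((e.extendByZero_val (Fin.last n)).symm.trans this.symm)

end Shift

section SubFrom

variable {ι R M : Type*} [DecidableEq ι] [CommRing R] [AddCommGroup M] [Module R M]
  (a : Basis ι R M) (i₀ : ι)

noncomputable def subFromEnd : Module.End R M :=
  a.constr R fun i => if i = i₀ then a i₀ else a i₀ - a i

theorem subFromEnd_basis (i : ι) :
    a.subFromEnd i₀ (a i) = if i = i₀ then a i₀ else a i₀ - a i :=
  a.constr_basis R _ i

theorem subFromEnd_involutive : Function.Involutive (a.subFromEnd i₀) := by
  have h : a.subFromEnd i₀ * a.subFromEnd i₀ = 1 := a.ext fun i => by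
    by_cases hi : i = i₀ <;>
      simp [Module.End.mul_apply, subFromEnd_basis, hi]
  exact fun x => LinearMap.congr_fun h x

noncomputable def subFrom : Basis ι R M :=
  a.map (LinearEquiv.ofInvolutive (a.subFromEnd i₀) (a.subFromEnd_involutive i₀))

theorem subFrom_apply (i : ι) : a.subFrom i₀ i = if i = i₀ then a i₀ else a i₀ - a i :=
  a.subFromEnd_basis i₀ i

theorem sumCoords_subFrom_of_ne {i : ι} (hi : i ≠ i₀) : a.sumCoords (a.subFrom i₀ i) = 0 := by
  rw [subFrom_apply, if_neg hi, map_sub, sumCoords_self_apply, sumCoords_self_apply, sub_self]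

end SubFrom

theorem sumCoords_comp_shift_subFrom_zero {R M : Type*} [CommRing R] [AddCommGroup M]
    [Module R M] {n : ℕ} (a : Basis (Fin (n + 1)) R M) :
    a.sumCoords ∘ₗ (a.subFrom 0).shift = 0 :=
  (a.subFrom 0).ext fun i => by
    rw [LinearMap.comp_apply, ← extendByZero_val, shift_extendByZero, LinearMap.zero_apply]
    by_cases hi : (i : ℕ) + 1 < n + 1
    · rw [show (i : ℕ) + 1 = (⟨i + 1, hi⟩ : Fin (n + 1)) from rfl, extendByZero_val]
      exact a.sumCoords_subFrom_of_ne 0 (Fin.ne_of_val_ne (Nat.succ_ne_zero _))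
    · rw [extendByZero_of_le _ (by omega), map_zero]

end Module.Basis

section Gametic

variable {K A : Type*} [Field K] [NonUnitalNonAssocCommRing A] [Module K A]

theorem leibniz_of_comp_eq_zero (ω : A →ₗ[K] K)
    (hmul : ∀ x y : A, x * y = (2 : K)⁻¹ • (ω x • y + ω y • x))
    {d : Module.End K A} (hd : ω ∘ₗ d = 0) (x y : A) :
    d (x * y) = d x * y + x * d y := by
  have hd' (z : A) : ω (d z) = 0 := LinearMap.congr_fun hd z
  simp only [hmul, map_smul, map_add, hd', zero_smul, add_zero, zero_add]
  module

theorem mul_eq_sumCoords_smul {ι : Type*} [SMulCommClass K A A] [IsScalarTower K A A]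
    (a : Basis ι K A) (hprod : ∀ i j, a i * a j = (2 : K)⁻¹ • a i + (2 : K)⁻¹ • a j)
    (x y : A) : x * y = (2 : K)⁻¹ • (a.sumCoords x • y + a.sumCoords y • x) := by
  let B : A →ₗ[K] A →ₗ[K] A := (2 : K)⁻¹ • ((LinearMap.lsmul K A ∘ₗ a.sumCoords) +
    (LinearMap.lsmul K A ∘ₗ a.sumCoords).flip)
  have h : LinearMap.mul K A = B := LinearMap.ext_basis a a fun i j => by
    simp only [B, LinearMap.mul_apply_apply, hprod, LinearMap.smul_apply, LinearMap.add_apply,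
      LinearMap.comp_apply, LinearMap.lsmul_apply, LinearMap.flip_apply, a.sumCoords_self_apply,
      one_smul]
    module
  simpa [B] using LinearMap.congr_fun₂ h x y

end Gametic

theorem gametic_dimensionally_nilpotent_general {K A : Type*} [Field K]
    [NonUnitalNonAssocCommRing A] [Module K A] [SMulCommClass K A A] [IsScalarTower K A A]
    (n : ℕ)
    (a : Module.Basis (Fin (n + 1)) K A)
    (hprod : ∀ i j : Fin (n + 1), a i * a j = (2 : K)⁻¹ • a i + (2 : K)⁻¹ • a j) :
    ∃ d : Module.End K A, (∀ x y : A, d (x * y) = d x * y + x * d y) ∧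
      d ^ (n + 1) = 0 ∧ d ^ n ≠ 0 :=
  ⟨(a.subFrom 0).shift,
    leibniz_of_comp_eq_zero _ (mul_eq_sumCoords_smul a hprod) a.sumCoords_comp_shift_subFrom_zero,
    (a.subFrom 0).shift_pow_succ_eq_zero, (a.subFrom 0).shift_pow_ne_zero⟩

/-- The gametic diploid algebra G(n+1,2), with basis a_0,…,a_n and products
a_i a_j = ½a_i + ½a_j over a field of characteristic ≠ 2, is dimensionally
nilpotent: it admits a derivation d with d^{n+1} = 0 and d^n ≠ 0. -/
theorem gametic_dimensionally_nilpotent {K A : Type*} [Field K]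
    [NonUnitalNonAssocCommRing A] [Module K A] [SMulCommClass K A A] [IsScalarTower K A A]
    (h2 : (2 : K) ≠ 0) (n : ℕ)
    (a : Module.Basis (Fin (n + 1)) K A)
    (hprod : ∀ i j : Fin (n + 1), a i * a j = (2 : K)⁻¹ • a i + (2 : K)⁻¹ • a j) :
    ∃ d : Module.End K A, (∀ x y : A, d (x * y) = d x * y + x * d y) ∧
      d ^ (n + 1) = 0 ∧ d ^ n ≠ 0 :=
  gametic_dimensionally_nilpotent_general n a hprod
end

section
/- Let A be the (n+1)-dimensional commutative algebra over a field K of characteristic ≠ 2 with basis {e_0,…,e_n}, products e_0² = e_0 + e_n, e_0 e_i = ½e_i (1 ≤ i ≤ n), all other products zero. Then the linear map d defined by d(e_i) = e_{i+1} (0 ≤ i ≤ n−1), d(e_n) = 0 is a derivation of A satisfying d^{n+1} = 0 and d^n ≠ 0; hence A is dimensionally nilpotent. -/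
/-!
Let `N` be the span of `e₁, …, eₙ`. Then `N² = 0` and `e₀` acts on `N` as multiplication by `½`.
Any linear map `d` with values in `N` and `d eₙ = 0` is a derivation: on `N × N` both sides vanish,
on `e₀ × N` both sides equal `½ d y`, and `d (e₀²) = d e₀ = (½ + ½) d e₀ = 2 e₀ d e₀`.
The shift is such a map, and it is nilpotent of order exactly `n + 1` since `dⁿ e₀ = eₙ`.
-/

open Module Submodule

section Shift

variable {R M : Type*} [Semiring R] [AddCommMonoid M] [Module R M] {n : ℕ}
  (e : Basis (Fin (n + 1)) R M) {d : Module.End R M}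
  (hshift : ∀ j : Fin n, d (e j.castSucc) = e j.succ) (hlast : d (e (Fin.last n)) = 0)
include hshift hlast

theorem shift_pow_apply (k : ℕ) (i : Fin (n + 1)) :
    (d ^ k) (e i) = if h : (i : ℕ) + k ≤ n then e ⟨i + k, by omega⟩ else 0 := by
  induction k generalizing i with
  | zero => simp [Fin.is_le]
  | succ k ih =>
    rw [pow_succ, Module.End.mul_apply]
    induction i using Fin.lastCases with
    | last => simp [hlast]
    | cast j =>
      rw [hshift, ih]
      simp only [Fin.val_succ, Fin.val_castSucc, add_right_comm _ 1 k, add_assoc]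

theorem shift_pow_succ_eq_zero : d ^ (n + 1) = 0 :=
  e.ext fun i => by
    simp only [shift_pow_apply e hshift hlast, LinearMap.zero_apply, dite_eq_right_iff]; omega

theorem shift_pow_ne_zero [Nontrivial R] : d ^ n ≠ 0 := fun h => by
  have hn := shift_pow_apply e hshift hlast n 0
  simp only [h, LinearMap.zero_apply, Fin.val_zero, zero_add, le_refl, dite_true] at hn
  exact e.ne_zero _ hn.symm

theorem shift_apply_mem_span_succ (i : Fin (n + 1)) :
    d (e i) ∈ span R (Set.range fun j : Fin n => e j.succ) := by
  induction i using Fin.lastCases with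
  | last => simp [hlast]
  | cast j => exact hshift j ▸ subset_span ⟨j, rfl⟩

end Shift

theorem Module.Basis.map_mul_of_forall {R A ι : Type*} [CommSemiring R]
    [NonUnitalNonAssocSemiring A] [Module R A] [SMulCommClass R A A] [IsScalarTower R A A]
    (b : Basis ι R A) (d : Module.End R A)
    (h : ∀ i j, d (b i * b j) = d (b i) * b j + b i * d (b j)) (x y : A) :
    d (x * y) = d x * y + x * d y := by
  have : (LinearMap.mul R A).compr₂ d =
      LinearMap.mul R A ∘ₗ d + (LinearMap.mul R A).compl₂ d :=
    b.ext fun i => b.ext fun j => by simpa using h i j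
  simpa using congr($this x y)

section SquareZeroSpan

variable {R A : Type*} [CommRing R] [NonUnitalNonAssocCommRing A] [Module R A]
  [SMulCommClass R A A] [IsScalarTower R A A] {n : ℕ} {e : Fin (n + 1) → A} {y : A}

theorem mul_eq_zero_of_mem_span_succ (hij : ∀ i j : Fin n, e i.succ * e j.succ = 0)
    (hy : y ∈ span R (Set.range fun j : Fin n => e j.succ)) (j : Fin n) : y * e j.succ = 0 := by
  suffices span R (Set.range fun j : Fin n => e j.succ) ≤
      LinearMap.ker ((LinearMap.mul R A).flip (e j.succ)) from this hy
  rw [span_le]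
  rintro _ ⟨i, rfl⟩
  exact hij i j

theorem mul_eq_smul_of_mem_span_succ {c : R} (h0i : ∀ j : Fin n, e 0 * e j.succ = c • e j.succ)
    (hy : y ∈ span R (Set.range fun j : Fin n => e j.succ)) : e 0 * y = c • y := by
  suffices span R (Set.range fun j : Fin n => e j.succ) ≤
      LinearMap.ker (LinearMap.mul R A (e 0) - c • LinearMap.id) by
    simpa [sub_eq_zero] using this hy
  rw [span_le]
  rintro _ ⟨j, rfl⟩
  simpa [sub_eq_zero] using h0i j

theorem map_mul_basis_of_mem_span_succ {c : R} (hc : c + c = 1)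
    (h00 : e 0 * e 0 = e 0 + e (Fin.last n))
    (h0i : ∀ j : Fin n, e 0 * e j.succ = c • e j.succ)
    (hij : ∀ i j : Fin n, e i.succ * e j.succ = 0) {d : A →ₗ[R] A}
    (hd : ∀ i, d (e i) ∈ span R (Set.range fun j : Fin n => e j.succ))
    (hlast : d (e (Fin.last n)) = 0) (i j : Fin (n + 1)) :
    d (e i * e j) = d (e i) * e j + e i * d (e j) := by
  have zero_left : ∀ j, d (e 0 * e j) = d (e 0) * e j + e 0 * d (e j) := by
    refine Fin.cases ?_ fun j => ?_
    · rw [h00, map_add, hlast, add_zero, mul_comm, mul_eq_smul_of_mem_span_succ h0i (hd 0),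
        ← add_smul, hc, one_smul]
    · rw [h0i, map_smul, mul_eq_zero_of_mem_span_succ hij (hd 0), zero_add,
        mul_eq_smul_of_mem_span_succ h0i (hd _)]
  induction i using Fin.cases with
  | zero => exact zero_left j
  | succ i =>
    induction j using Fin.cases with
    | zero => rw [mul_comm, zero_left, mul_comm (d _), mul_comm (e 0), add_comm]
    | succ j =>
      rw [hij, map_zero, mul_eq_zero_of_mem_span_succ hij (hd _), mul_comm,
        mul_eq_zero_of_mem_span_succ hij (hd _), add_zero]

end SquareZeroSpan

/-- The (n+1)-dimensional algebra with e_0² = e_0 + e_n, e_0e_i = ½e_i (1 ≤ i ≤ n)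
and all other products zero: the shift map d(e_i) = e_{i+1}, d(e_n) = 0 is a
derivation with d^{n+1} = 0 and d^n ≠ 0, so the algebra is dimensionally nilpotent. -/
theorem pseudo_gametic_dimensionally_nilpotent {K A : Type*} [Field K]
    [NonUnitalNonAssocCommRing A] [Module K A] [SMulCommClass K A A] [IsScalarTower K A A]
    (h2 : (2 : K) ≠ 0) (n : ℕ)
    (e : Module.Basis (Fin (n + 1)) K A)
    (h00 : e 0 * e 0 = e 0 + e ⟨n, Nat.lt_succ_self n⟩)
    (h0i : ∀ i : Fin (n + 1), 1 ≤ (i : ℕ) → e 0 * e i = (2 : K)⁻¹ • e i)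
    (hij : ∀ i j : Fin (n + 1), 1 ≤ (i : ℕ) → 1 ≤ (j : ℕ) → e i * e j = 0)
    (d : Module.End K A)
    (hdshift : ∀ i : Fin (n + 1), ∀ hi : (i : ℕ) < n,
      d (e i) = e ⟨(i : ℕ) + 1, Nat.succ_lt_succ hi⟩)
    (hdtop : d (e ⟨n, Nat.lt_succ_self n⟩) = 0) :
    (∀ x y : A, d (x * y) = d x * y + x * d y) ∧ d ^ (n + 1) = 0 ∧ d ^ n ≠ 0 := by
  have hshift : ∀ j : Fin n, d (e j.castSucc) = e j.succ := fun j => hdshift j.castSucc j.isLt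
  have hhalf : (2 : K)⁻¹ + (2 : K)⁻¹ = 1 := by rw [← two_mul, mul_inv_cancel₀ h2]
  refine ⟨e.map_mul_of_forall d fun i j => ?_, shift_pow_succ_eq_zero e hshift hdtop,
    shift_pow_ne_zero e hshift hdtop⟩
  exact map_mul_basis_of_mem_span_succ hhalf h00 (fun j => h0i j.succ (by simp))
    (fun i j => hij i.succ j.succ (by simp) (by simp)) (shift_apply_mem_span_succ e hshift hdtop)
    hdtop i j
end

section
/- In the algebra A with basis {e_0,…,e_n}, products e_0² = e_0 + e_n, e_0e_i = ½e_i (1 ≤ i ≤ n) and all other products zero, the span Ke_n is an ideal, and the quotient A/Ke_n is isomorphic to the gametic algebra G(n,2). -/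
/-!
Send `e_i ↦ f_i` for `i < n` and `e_n ↦ 0`. Both bases obey the gametic multiplication table,
up to the extra summand `e_n` in `e_0²`, which the map kills; so the map is multiplicative, and it
is surjective. Its kernel contains `e_n` and, by rank–nullity, is one-dimensional.
-/

open Module Submodule

theorem LinearMap.map_mul_of_basis {K A B ι : Type*} [CommSemiring K]
    [NonUnitalNonAssocSemiring A] [Module K A] [SMulCommClass K A A] [IsScalarTower K A A]
    [NonUnitalNonAssocSemiring B] [Module K B] [SMulCommClass K B B] [IsScalarTower K B B]
    (φ : A →ₗ[K] B) (b : Basis ι K A) (h : ∀ i j, φ (b i * b j) = φ (b i) * φ (b j))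
    (x y : A) : φ (x * y) = φ x * φ y := by
  have : (LinearMap.mul K A).compr₂ φ = (LinearMap.mul K B).compl₁₂ φ φ :=
    b.ext fun i => b.ext fun j => by simpa using h i j
  simpa using LinearMap.congr_fun₂ this x y

theorem Module.Basis.mul_mem_of_forall_basis_mul_mem {K A ι : Type*} [CommSemiring K]
    [NonUnitalNonAssocSemiring A] [Module K A] [SMulCommClass K A A] [IsScalarTower K A A]
    (b : Basis ι K A) {p : Submodule K A} {a : A} (h : ∀ i, b i * a ∈ p) (x : A) :
    x * a ∈ p := by
  have : span K (Set.range b) ≤ p.comap (LinearMap.mulRight K a) :=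
    span_le.mpr (Set.range_subset_iff.mpr h)
  exact this (b.mem_span x)

theorem LinearMap.ker_eq_span_singleton_of_surjective {K V W : Type*} [Field K]
    [AddCommGroup V] [Module K V] [FiniteDimensional K V] [AddCommGroup W] [Module K W]
    (φ : V →ₗ[K] W) (hφ : Function.Surjective φ) (hdim : finrank K V = finrank K W + 1)
    {v : V} (hv : v ≠ 0) (hφv : φ v = 0) : ker φ = K ∙ v := by
  refine (eq_of_le_of_finrank_eq ((span_singleton_le_iff_mem v _).mpr hφv) ?_).symm
  have := φ.finrank_range_add_finrank_ker
  rw [range_eq_top.mpr hφ, finrank_top] at this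
  rw [finrank_span_singleton hv]
  omega

section

variable (K : Type*) {A B ι : Type*} [Field K]

/-- `v` multiplies like the canonical basis of a gametic algebra `G(n,2)` with `v o` playing
the role of `f_0`, except that `v o * v o = v o + c`. -/
structure IsGameticTable [NonUnitalNonAssocSemiring B] [Module K B]
    (v : ι → B) (o : ι) (c : B) : Prop where
  sq_self : v o * v o = v o + c
  mul_of_ne : ∀ i ≠ o, v o * v i = (2 : K)⁻¹ • v i
  mul_eq_zero : ∀ i ≠ o, ∀ j ≠ o, v i * v j = 0

namespace IsGameticTable

variable {K}

theorem snoc [NonUnitalNonAssocSemiring B] [Module K B] {n : ℕ} {v : Fin n → B} {o : Fin n}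
    (hv : IsGameticTable K v o 0) :
    IsGameticTable K (Fin.snoc (α := fun _ => B) v 0) o.castSucc 0 where
  sq_self := by simpa using hv.sq_self
  mul_of_ne i hi := by
    induction i using Fin.lastCases with
    | last => simp
    | cast i => simpa using hv.mul_of_ne i (by rintro rfl; exact hi rfl)
  mul_eq_zero i hi j hj := by
    induction i using Fin.lastCases with
    | last => simp
    | cast i =>
      induction j using Fin.lastCases with
      | last => simp
      | cast j =>
        simpa using hv.mul_eq_zero i (by rintro rfl; exact hi rfl) j (by rintro rfl; exact hj rfl)

theorem mul_mem_span_singleton [NonUnitalNonAssocSemiring A] [Module K A]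
    [SMulCommClass K A A] [IsScalarTower K A A] {b : Basis ι K A} {o z : ι}
    (hb : IsGameticTable K b o (b z)) (hz : z ≠ o) (x : A) : x * b z ∈ K ∙ b z := by
  refine b.mul_mem_of_forall_basis_mul_mem (fun i => ?_) x
  obtain rfl | hi := eq_or_ne i o
  · rw [hb.mul_of_ne z hz]
    exact smul_mem _ _ (mem_span_singleton_self _)
  · rw [hb.mul_eq_zero i hi z hz]
    exact zero_mem _

theorem map_mul_of_basis [NonUnitalNonAssocCommSemiring A] [Module K A] [SMulCommClass K A A]
    [IsScalarTower K A A] [NonUnitalNonAssocCommSemiring B] [Module K B] [SMulCommClass K B B]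
    [IsScalarTower K B B] {b : Basis ι K A} {o : ι} {c : A} (hb : IsGameticTable K b o c)
    {φ : A →ₗ[K] B} (hφ : IsGameticTable K (φ ∘ b) o (φ c)) (x y : A) :
    φ (x * y) = φ x * φ y := by
  refine φ.map_mul_of_basis b (fun i j => ?_) x y
  obtain rfl | hi := eq_or_ne o i <;> obtain rfl | hj := eq_or_ne o j
  · rw [hb.sq_self, map_add]
    exact hφ.sq_self.symm
  · rw [hb.mul_of_ne j hj.symm, map_smul]
    exact (hφ.mul_of_ne j hj.symm).symm
  · rw [mul_comm, hb.mul_of_ne i hi.symm, map_smul, mul_comm]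
    exact (hφ.mul_of_ne i hi.symm).symm
  · rw [hb.mul_eq_zero i hi.symm j hj.symm, map_zero]
    exact (hφ.mul_eq_zero i hi.symm j hj.symm).symm

end IsGameticTable

end

theorem quotient_iso_gametic_general {K A B : Type*} [Field K]
    [NonUnitalNonAssocCommRing A] [Module K A] [SMulCommClass K A A] [IsScalarTower K A A]
    [NonUnitalNonAssocCommRing B] [Module K B] [SMulCommClass K B B] [IsScalarTower K B B]
    (n : ℕ) (hn : 1 ≤ n)
    (e : Module.Basis (Fin (n + 1)) K A)
    (h00 : e 0 * e 0 = e 0 + e ⟨n, Nat.lt_succ_self n⟩)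
    (h0i : ∀ i : Fin (n + 1), 1 ≤ (i : ℕ) → e 0 * e i = (2 : K)⁻¹ • e i)
    (hij : ∀ i j : Fin (n + 1), 1 ≤ (i : ℕ) → 1 ≤ (j : ℕ) → e i * e j = 0)
    (f : Module.Basis (Fin n) K B)
    (hf00 : f ⟨0, hn⟩ * f ⟨0, hn⟩ = f ⟨0, hn⟩)
    (hf0i : ∀ i : Fin n, 1 ≤ (i : ℕ) → f ⟨0, hn⟩ * f i = (2 : K)⁻¹ • f i)
    (hfij : ∀ i j : Fin n, 1 ≤ (i : ℕ) → 1 ≤ (j : ℕ) → f i * f j = 0) :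
    (∀ x : A, x * e ⟨n, Nat.lt_succ_self n⟩ ∈
        Submodule.span K {e ⟨n, Nat.lt_succ_self n⟩}) ∧
    ∃ φ : A →ₗ[K] B, (∀ x y : A, φ (x * y) = φ x * φ y) ∧ Function.Surjective φ ∧
      LinearMap.ker φ = Submodule.span K {e ⟨n, Nat.lt_succ_self n⟩} := by
  have one_le {m : ℕ} (i : Fin m) (h : 0 < m) (hi : i ≠ ⟨0, h⟩) : 1 ≤ (i : ℕ) :=
    Nat.one_le_iff_ne_zero.mpr fun h0 => hi (Fin.ext h0)
  have he : IsGameticTable K e 0 (e (Fin.last n)) :=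
    ⟨h00, fun i hi => h0i i (one_le i _ hi),
      fun i hi j hj => hij i j (one_le i _ hi) (one_le j _ hj)⟩
  have hf : IsGameticTable K f ⟨0, hn⟩ 0 :=
    ⟨by rw [hf00, add_zero], fun i hi => hf0i i (one_le i _ hi),
      fun i hi j hj => hfij i j (one_le i _ hi) (one_le j _ hj)⟩
  set φ := e.constr K (Fin.snoc (α := fun _ => B) f 0)
  have hφe : φ ∘ e = Fin.snoc (α := fun _ => B) f 0 := funext (e.constr_basis K _)
  have hφ_last : φ (e (Fin.last n)) = 0 := (congrFun hφe _).trans (Fin.snoc_last _ _)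
  have hsurj : Function.Surjective φ := by
    rw [← LinearMap.range_eq_top, e.constr_range, Fin.range_snoc, span_insert_zero, f.span_eq]
  have := Module.Finite.of_basis e
  refine ⟨he.mul_mem_span_singleton (Fin.ne_of_val_ne (Nat.one_le_iff_ne_zero.mp hn)), φ,
    he.map_mul_of_basis ?_, hsurj,
    φ.ker_eq_span_singleton_of_surjective hsurj ?_ (e.ne_zero _) hφ_last⟩
  · rw [hφe, hφ_last]
    exact hf.snoc
  · simp [finrank_eq_card_basis e, finrank_eq_card_basis f]

/-- In the algebra with basis e_0,…,e_n, e_0² = e_0 + e_n, e_0e_i = ½e_i and all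
other products zero, Ke_n is an ideal and the quotient A/Ke_n is isomorphic to the
gametic algebra G(n,2) (equivalently there is a surjective multiplicative linear
map A → G(n,2) whose kernel is Ke_n). -/
theorem quotient_iso_gametic {K A B : Type*} [Field K]
    [NonUnitalNonAssocCommRing A] [Module K A] [SMulCommClass K A A] [IsScalarTower K A A]
    [NonUnitalNonAssocCommRing B] [Module K B] [SMulCommClass K B B] [IsScalarTower K B B]
    (h2 : (2 : K) ≠ 0) (n : ℕ) (hn : 1 ≤ n)
    (e : Module.Basis (Fin (n + 1)) K A)
    (h00 : e 0 * e 0 = e 0 + e ⟨n, Nat.lt_succ_self n⟩)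
    (h0i : ∀ i : Fin (n + 1), 1 ≤ (i : ℕ) → e 0 * e i = (2 : K)⁻¹ • e i)
    (hij : ∀ i j : Fin (n + 1), 1 ≤ (i : ℕ) → 1 ≤ (j : ℕ) → e i * e j = 0)
    (f : Module.Basis (Fin n) K B)
    (hf00 : f ⟨0, hn⟩ * f ⟨0, hn⟩ = f ⟨0, hn⟩)
    (hf0i : ∀ i : Fin n, 1 ≤ (i : ℕ) → f ⟨0, hn⟩ * f i = (2 : K)⁻¹ • f i)
    (hfij : ∀ i j : Fin n, 1 ≤ (i : ℕ) → 1 ≤ (j : ℕ) → f i * f j = 0) :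
    (∀ x : A, x * e ⟨n, Nat.lt_succ_self n⟩ ∈
        Submodule.span K {e ⟨n, Nat.lt_succ_self n⟩}) ∧
    ∃ φ : A →ₗ[K] B, (∀ x y : A, φ (x * y) = φ x * φ y) ∧ Function.Surjective φ ∧
      LinearMap.ker φ = Submodule.span K {e ⟨n, Nat.lt_succ_self n⟩} :=
  quotient_iso_gametic_general n hn e h00 h0i hij f hf00 hf0i hfij
end

section
/- Let A be a dimensionally nilpotent Lie triple non-nil algebra of dimension n+1 with adapted basis {e_0,…,e_n} (so d(e_i) = e_{i+1} for i < n, d(e_n) = 0, and e_0 is an idempotent or pseudo-idempotent with e_0e_1 = ½e_1). Then e_0 e_n = λ_n e_n for some scalar λ_n, and e_k e_n = 0 for all 1 ≤ k ≤ n. -/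
/-!
Write `E = e_n` and `N = span {e_1, …, e_n}`. Since `d E = 0`, the Leibniz rule gives
`d (x E) = d x · E`, and the kernel of `d` is `K E`. So whenever `d x · E = 0`, `x E = c E`
for some `c`; if moreover `x ∈ N`, then `c` is an eigenvalue of the nilpotent multiplication
by `x`, hence `c = 0`. Descending from `k = n` (where `d e_n = 0`) through
`d e_k = e_{k+1}`, this kills every `e_k E` with `k ≥ 1`. Finally `d (e_0 E) = e_1 E = 0`
(or `e_0 = E` when `n = 0`), so `e_0 E ∈ K E`.
-/

open Module

theorem eq_zero_of_mul_eq_smul_of_iterate_mul_eq_zero {K A : Type*} [Field K]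
    [NonUnitalNonAssocRing A] [Module K A] [SMulCommClass K A A]
    {x y : A} {c : K} {m : ℕ} (hm : ∀ z : A, (fun w => x * w)^[m] z = 0)
    (hy : y ≠ 0) (hxy : x * y = c • y) : c = 0 := by
  have hnil : IsNilpotent (LinearMap.mulLeft K x) :=
    ⟨m, LinearMap.ext fun z => by rw [End.pow_apply]; exact hm z⟩
  have heig : End.HasEigenvalue (LinearMap.mulLeft K x) c :=
    End.hasEigenvalue_of_hasEigenvector ⟨End.mem_eigenspace_iff.mpr hxy, hy⟩
  exact (heig.isNilpotent_of_isNilpotent hnil).eq_zero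

namespace Module.Basis

variable {K M : Type*} [Field K] [AddCommGroup M] [Module K M] {n : ℕ}
  (e : Basis (Fin (n + 1)) K M)

theorem mem_span_range_succ {k : Fin (n + 1)} (hk : 1 ≤ (k : ℕ)) :
    e k ∈ Submodule.span K (Set.range fun i : Fin n => e i.succ) :=
  Submodule.subset_span ⟨k.pred (Fin.pos_iff_ne_zero.mp hk), by simp⟩

variable {e} {d : End K M} (hadapt : ∀ i : Fin n, d (e i.castSucc) = e i.succ)
  (hdtop : d (e (Fin.last n)) = 0)
include hadapt hdtop

theorem apply_eq_sum_repr_castSucc (v : M) :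
    d v = ∑ i : Fin n, e.repr v i.castSucc • e i.succ := by
  conv_lhs => rw [← e.sum_repr v]
  simp only [map_add, map_sum, map_smul, Fin.sum_univ_castSucc, hadapt, hdtop, smul_zero,
    add_zero]

theorem exists_eq_smul_last_of_apply_eq_zero {v : M} (hv : d v = 0) :
    ∃ c : K, v = c • e (Fin.last n) := by
  have hcoord : ∀ i : Fin n, e.repr v i.castSucc = 0 :=
    Fintype.linearIndependent_iff.mp (e.linearIndependent.comp _ (Fin.succ_injective n)) _
      ((apply_eq_sum_repr_castSucc hadapt hdtop v).symm.trans hv)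
  refine ⟨e.repr v (Fin.last n), ?_⟩
  conv_lhs => rw [← e.sum_repr v]
  simp only [Fin.sum_univ_castSucc, hcoord, zero_smul, Finset.sum_const_zero, zero_add]

end Module.Basis

section AdaptedDerivation

variable {K A : Type*} [Field K] [NonUnitalNonAssocRing A] [Module K A]
  {n : ℕ} {e : Basis (Fin (n + 1)) K A} {d : End K A}
  (hd : ∀ x y : A, d (x * y) = d x * y + x * d y)
  (hadapt : ∀ i : Fin n, d (e i.castSucc) = e i.succ) (hdtop : d (e (Fin.last n)) = 0)
  (hnil : ∀ x ∈ Submodule.span K (Set.range fun i : Fin n => e i.succ),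
    ∃ m : ℕ, ∀ y : A, (fun z => x * z)^[m] y = 0)
include hd hadapt hdtop

theorem exists_mul_last_eq_smul_last_of_apply_mul_eq_zero {x : A}
    (hx : d x * e (Fin.last n) = 0) : ∃ c : K, x * e (Fin.last n) = c • e (Fin.last n) :=
  Basis.exists_eq_smul_last_of_apply_eq_zero hadapt hdtop <| by
    rw [hd, hdtop, mul_zero, add_zero, hx]

variable [SMulCommClass K A A]
include hnil

theorem mul_last_eq_zero_of_apply_mul_eq_zero {x : A}
    (hmem : x ∈ Submodule.span K (Set.range fun i : Fin n => e i.succ))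
    (hx : d x * e (Fin.last n) = 0) : x * e (Fin.last n) = 0 := by
  obtain ⟨c, hc⟩ := exists_mul_last_eq_smul_last_of_apply_mul_eq_zero hd hadapt hdtop hx
  obtain ⟨m, hm⟩ := hnil x hmem
  rw [hc, eq_zero_of_mul_eq_smul_of_iterate_mul_eq_zero hm (e.ne_zero _) hc, zero_smul]

theorem basis_mul_last_eq_zero (k : Fin (n + 1)) (hk : 1 ≤ (k : ℕ)) :
    e k * e (Fin.last n) = 0 := by
  induction k using Fin.reverseInduction with
  | last =>
    exact mul_last_eq_zero_of_apply_mul_eq_zero hd hadapt hdtop hnil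
      (e.mem_span_range_succ hk) (by rw [hdtop, zero_mul])
  | cast i ih =>
    exact mul_last_eq_zero_of_apply_mul_eq_zero hd hadapt hdtop hnil
      (e.mem_span_range_succ hk) (by rw [hadapt, ih i.succ_pos])

theorem apply_basis_mul_last_eq_zero (k : Fin (n + 1)) : d (e k) * e (Fin.last n) = 0 := by
  induction k using Fin.lastCases with
  | last => rw [hdtop, zero_mul]
  | cast i => rw [hadapt, basis_mul_last_eq_zero hd hadapt hdtop hnil _ i.succ_pos]

end AdaptedDerivation

theorem top_basis_products_general {K A : Type*} [Field K]
    [NonUnitalNonAssocCommRing A] [Module K A] [SMulCommClass K A A]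
    (n : ℕ)
    (e : Module.Basis (Fin (n + 1)) K A)
    (d : Module.End K A) (hd : ∀ x y : A, d (x * y) = d x * y + x * d y)
    (hadapt : ∀ i : Fin (n + 1), ∀ hi : (i : ℕ) < n,
      d (e i) = e ⟨(i : ℕ) + 1, Nat.succ_lt_succ hi⟩)
    (hdtop : d (e ⟨n, Nat.lt_succ_self n⟩) = 0)
    (hnil : ∀ x ∈ Submodule.span K (Set.range fun i : Fin n => e i.succ),
      ∃ m : ℕ, ∀ y : A, (fun z => x * z)^[m] y = 0) :
    (∃ lam : K, e 0 * e ⟨n, Nat.lt_succ_self n⟩ = lam • e ⟨n, Nat.lt_succ_self n⟩) ∧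
    ∀ k : Fin (n + 1), 1 ≤ (k : ℕ) → e k * e ⟨n, Nat.lt_succ_self n⟩ = 0 := by
  have hstep : ∀ i : Fin n, d (e i.castSucc) = e i.succ := fun i => hadapt i.castSucc i.isLt
  exact ⟨exists_mul_last_eq_smul_last_of_apply_mul_eq_zero hd hstep hdtop
      (apply_basis_mul_last_eq_zero hd hstep hdtop hnil 0),
    basis_mul_last_eq_zero hd hstep hdtop hnil⟩

/-- In a dimensionally nilpotent Lie triple non-nil algebra with adapted basis
{e_0,…,e_n} (e_0 an idempotent or pseudo-idempotent, e_0e_1 = ½e_1, and the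
radical span{e_1,…,e_n} nilpotent), one has e_0e_n = λ_n e_n for some scalar λ_n,
and e_k e_n = 0 for 1 ≤ k ≤ n. -/
theorem top_basis_products {K A : Type*} [Field K]
    [NonUnitalNonAssocCommRing A] [Module K A] [SMulCommClass K A A] [IsScalarTower K A A]
    (h2 : (2 : K) ≠ 0) (h3 : (3 : K) ≠ 0)
    (n : ℕ) (hn : 1 ≤ n)
    (e : Module.Basis (Fin (n + 1)) K A)
    (hLT : ∀ x y : A, 2 • (x * (x * (x * y))) + y * (x * (x * x)) = 3 • (x * (y * (x * x))))
    (d : Module.End K A) (hd : ∀ x y : A, d (x * y) = d x * y + x * d y)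
    (hadapt : ∀ i : Fin (n + 1), ∀ hi : (i : ℕ) < n,
      d (e i) = e ⟨(i : ℕ) + 1, Nat.succ_lt_succ hi⟩)
    (hdtop : d (e ⟨n, Nat.lt_succ_self n⟩) = 0)
    (hidem : e 0 * e 0 = e 0 ∨ ∃ t : A, t ≠ 0 ∧ e 0 * e 0 = e 0 + t ∧
      e 0 * t = (2 : K)⁻¹ • t ∧ t * t = 0)
    (h01 : e 0 * e ⟨1, Nat.lt_succ_of_le hn⟩ = (2 : K)⁻¹ • e ⟨1, Nat.lt_succ_of_le hn⟩)
    (hnil : ∀ x ∈ Submodule.span K (Set.range fun i : Fin n => e i.succ),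
      ∃ m : ℕ, ∀ y : A, (fun z => x * z)^[m] y = 0) :
    (∃ lam : K, e 0 * e ⟨n, Nat.lt_succ_self n⟩ = lam • e ⟨n, Nat.lt_succ_self n⟩) ∧
    ∀ k : Fin (n + 1), 1 ≤ (k : ℕ) → e k * e ⟨n, Nat.lt_succ_self n⟩ = 0 :=
  top_basis_products_general n e d hd hadapt hdtop hnil
end

section
/- Let A be a dimensionally nilpotent Lie triple non-nil algebra with adapted basis {e_0,…,e_n}, with e_0 (pseudo-)idempotent. Then for each 1 ≤ k ≤ n, writing e_0 e_k = λ_k e_k + (terms in e_{k+1},…,e_n), the eigenvalue λ_k belongs to {0, 1/2, 1}. -/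
/-!
Write `x = e ⊥` and let `F k` be the span of the basis vectors above `e k`. Triangularity makes
each `F k` stable under `L = x * ·` and `F ⊥` an ideal, and `L` acts on `e k` modulo `F k` as `λ_k`.
In both the idempotent and the pseudo-idempotent case `x * x ≡ x` modulo `F ⊥`, so the Lie triple
identity `2 x(x(xy)) + y(x(xx)) = 3 x(y(xx))` at `y = e k` reads `2λ_k³ + λ_k = 3λ_k²` on the
`k`-th coordinate, whose roots are `0`, `1/2` and `1`.
-/

open Module Submodule Set

section Flag

variable {R M ι : Type*} [Ring R] [AddCommGroup M] [Module R M] [LinearOrder ι] (e : Basis ι R M)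

def upperFlag (k : ι) : Submodule R M := span R (e '' Ioi k)

lemma upperFlag_antitone : Antitone (upperFlag e) :=
  fun _ _ h => span_mono (image_mono (Ioi_subset_Ioi h))

lemma basis_mem_upperFlag {k i : ι} (h : k < i) : e i ∈ upperFlag e k :=
  subset_span (mem_image_of_mem e h)

lemma mem_upperFlag_iff {k : ι} {v : M} : v ∈ upperFlag e k ↔ ∀ j ≤ k, e.repr v j = 0 := by
  rw [upperFlag, e.mem_span_image]
  refine ⟨fun h j hj => ?_, fun h j hj => ?_⟩
  · by_contra hne
    exact (not_lt_of_ge hj) (h (Finsupp.mem_support_iff.2 hne))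
  · by_contra hle
    exact Finsupp.mem_support_iff.1 hj (h j (not_lt.1 hle))

lemma repr_self_of_sub_mem_upperFlag {k : ι} {v : M} {c : R}
    (h : v - c • e k ∈ upperFlag e k) : e.repr v k = c := by
  simpa [sub_eq_zero] using (mem_upperFlag_iff e).1 h k le_rfl

lemma mem_upperFlag_bot_iff [OrderBot ι] {v : M} : v ∈ upperFlag e ⊥ ↔ e.repr v ⊥ = 0 := by
  simp [mem_upperFlag_iff]

end Flag

section Triangular

variable {R A ι : Type*} [CommRing R] [NonUnitalNonAssocCommRing A] [Module R A]
  [SMulCommClass R A A] [LinearOrder ι] [OrderBot ι] (e : Basis ι R A) (lam : ι → R)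

lemma mul_mem_upperFlag_of_triangular
    (htri : ∀ k, ⊥ < k → e ⊥ * e k - lam k • e k ∈ upperFlag e k)
    {m : ι} {v : A} (hv : v ∈ upperFlag e m) : e ⊥ * v ∈ upperFlag e m := by
  suffices upperFlag e m ≤ (upperFlag e m).comap (LinearMap.mulLeft R (e ⊥)) from this hv
  refine span_le.2 (image_subset_iff.2 fun i (hi : m < i) => ?_)
  simpa using add_mem (upperFlag_antitone e hi.le (htri i (bot_le.trans_lt hi)))
    (smul_mem _ (lam i) (basis_mem_upperFlag e hi))

lemma mul_mem_upperFlag_of_bot_lt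
    (htri2 : ∀ i k, ⊥ < i → i ≤ k → e i * e k ∈ upperFlag e k)
    {j : ι} (hj : ⊥ < j) {v : A} (hv : v ∈ upperFlag e ⊥) : e j * v ∈ upperFlag e j := by
  suffices upperFlag e ⊥ ≤ (upperFlag e j).comap (LinearMap.mulLeft R (e j)) from this hv
  refine span_le.2 (image_subset_iff.2 fun i (hi : ⊥ < i) => ?_)
  rcases le_or_gt i j with hij | hji
  · simpa [mul_comm (e j)] using htri2 i j hi hij
  · exact upperFlag_antitone e hji.le (htri2 j i hj hji.le)

lemma sub_mem_upperFlag_mul_of_sub_mem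
    (htri : ∀ k, ⊥ < k → e ⊥ * e k - lam k • e k ∈ upperFlag e k)
    {k : ι} (hk : ⊥ < k) {v : A} {c : R} (hv : v - c • e k ∈ upperFlag e k) :
    e ⊥ * v - (lam k * c) • e k ∈ upperFlag e k := by
  have hdecomp : e ⊥ * v - (lam k * c) • e k
      = c • (e ⊥ * e k - lam k • e k) + e ⊥ * (v - c • e k) := by
    rw [mul_sub, mul_smul_comm, smul_sub, smul_smul, mul_comm c (lam k)]
    abel
  rw [hdecomp]
  exact add_mem (smul_mem _ c (htri k hk)) (mul_mem_upperFlag_of_triangular e lam htri hv)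

variable [IsScalarTower R A A]

lemma mul_mem_upperFlag_bot
    (htri : ∀ k, ⊥ < k → e ⊥ * e k - lam k • e k ∈ upperFlag e k)
    (htri2 : ∀ i k, ⊥ < i → i ≤ k → e i * e k ∈ upperFlag e k)
    (u : A) {v : A} (hv : v ∈ upperFlag e ⊥) : u * v ∈ upperFlag e ⊥ := by
  induction e.mem_span u using span_induction with
  | mem x hx =>
    obtain ⟨i, rfl⟩ := hx
    rcases eq_bot_or_bot_lt i with rfl | hi
    · exact mul_mem_upperFlag_of_triangular e lam htri hv
    · exact upperFlag_antitone e bot_le (mul_mem_upperFlag_of_bot_lt e htri2 hi hv)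
  | zero => simp
  | add x y _ _ hx hy => rw [add_mul]; exact add_mem hx hy
  | smul c x _ hx => rw [smul_mul_assoc]; exact smul_mem _ c hx

lemma repr_bot_mul
    (htri : ∀ k, ⊥ < k → e ⊥ * e k - lam k • e k ∈ upperFlag e k)
    (htri2 : ∀ i k, ⊥ < i → i ≤ k → e i * e k ∈ upperFlag e k) (u v : A) :
    e.repr (u * v) ⊥ = e.repr u ⊥ * e.repr v ⊥ * e.repr (e ⊥ * e ⊥) ⊥ := by
  set a := e.repr u ⊥
  set b := e.repr v ⊥
  have hu : u - a • e ⊥ ∈ upperFlag e ⊥ := (mem_upperFlag_bot_iff e).2 (by simp [a])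
  have hv : v - b • e ⊥ ∈ upperFlag e ⊥ := (mem_upperFlag_bot_iff e).2 (by simp [b])
  have hdecomp : u * v - (a * b) • (e ⊥ * e ⊥)
      = a • (e ⊥ * (v - b • e ⊥)) + v * (u - a • e ⊥) := by
    simp only [mul_sub, mul_smul_comm, smul_sub, smul_smul, mul_comm v u, mul_comm v (e ⊥)]
    abel
  have hmem := add_mem (smul_mem _ a (mul_mem_upperFlag_bot e lam htri htri2 (e ⊥) hv))
    (mul_mem_upperFlag_bot e lam htri htri2 v hu)
  rw [← hdecomp, mem_upperFlag_bot_iff] at hmem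
  simpa [sub_eq_zero] using hmem

end Triangular

section Eigenvalues

variable {K A ι : Type*} [Field K] [NonUnitalNonAssocCommRing A] [Module K A]
  [SMulCommClass K A A] [IsScalarTower K A A] [LinearOrder ι] [OrderBot ι]
  (e : Basis ι K A) (lam : ι → K)

lemma mem_upperFlag_bot_of_pseudoIdempotent
    (htri : ∀ k, ⊥ < k → e ⊥ * e k - lam k • e k ∈ upperFlag e k)
    (htri2 : ∀ i k, ⊥ < i → i ≤ k → e i * e k ∈ upperFlag e k) (h2 : (2 : K) ≠ 0)
    {t : A} (hsq : e ⊥ * e ⊥ = e ⊥ + t) (hmul : e ⊥ * t = (2 : K)⁻¹ • t) (htt : t * t = 0) :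
    t ∈ upperFlag e ⊥ := by
  set c := e.repr t ⊥
  have hr : e.repr (e ⊥ * e ⊥) ⊥ = 1 + c := by simp [hsq, c]
  have hxt := repr_bot_mul e lam htri htri2 (e ⊥) t
  have htt' := repr_bot_mul e lam htri htri2 t t
  simp only [hmul, htt, hr, map_smul, map_zero, Finsupp.smul_apply, Finsupp.zero_apply,
    Basis.repr_self, Finsupp.single_eq_same, smul_eq_mul] at hxt htt'
  -- `c / 2 = c (1 + c)` and `0 = c² (1 + c)`
  have hc : (2 : K)⁻¹ * (c * c) = 0 := by linear_combination c * hxt - htt'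
  exact (mem_upperFlag_bot_iff e).2
    (mul_self_eq_zero.1 ((mul_eq_zero.1 hc).resolve_left (inv_ne_zero h2)))

lemma mul_self_sub_mem_upperFlag_bot
    (htri : ∀ k, ⊥ < k → e ⊥ * e k - lam k • e k ∈ upperFlag e k)
    (htri2 : ∀ i k, ⊥ < i → i ≤ k → e i * e k ∈ upperFlag e k) (h2 : (2 : K) ≠ 0)
    (hidem : e ⊥ * e ⊥ = e ⊥ ∨ ∃ t : A, t ≠ 0 ∧ e ⊥ * e ⊥ = e ⊥ + t ∧
      e ⊥ * t = (2 : K)⁻¹ • t ∧ t * t = 0) :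
    e ⊥ * e ⊥ - e ⊥ ∈ upperFlag e ⊥ := by
  rcases hidem with hsq | ⟨t, -, hsq, hmul, htt⟩
  · simp [hsq]
  · simpa [hsq] using mem_upperFlag_bot_of_pseudoIdempotent e lam htri htri2 h2 hsq hmul htt

lemma two_mul_cube_add_eq_three_mul_sq
    (htri : ∀ k, ⊥ < k → e ⊥ * e k - lam k • e k ∈ upperFlag e k)
    (htri2 : ∀ i k, ⊥ < i → i ≤ k → e i * e k ∈ upperFlag e k)
    (hLT : ∀ x y : A, 2 • (x * (x * (x * y))) + y * (x * (x * x)) = 3 • (x * (y * (x * x))))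
    (hsq : e ⊥ * e ⊥ - e ⊥ ∈ upperFlag e ⊥) {k : ι} (hk : ⊥ < k) :
    2 * lam k ^ 3 + lam k = 3 * lam k ^ 2 := by
  set x := e ⊥
  set y := e k
  set s := x * x - x
  have h1 : x * y - lam k • y ∈ upperFlag e k := htri k hk
  have h2 : x * (x * y) - (lam k * lam k) • y ∈ upperFlag e k :=
    sub_mem_upperFlag_mul_of_sub_mem e lam htri hk h1
  have h3 : x * (x * (x * y)) - (lam k * (lam k * lam k)) • y ∈ upperFlag e k :=
    sub_mem_upperFlag_mul_of_sub_mem e lam htri hk h2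
  have hys : y * s ∈ upperFlag e k := mul_mem_upperFlag_of_bot_lt e htri2 hk hsq
  have hyxs : y * (x * s) ∈ upperFlag e k :=
    mul_mem_upperFlag_of_bot_lt e htri2 hk (mul_mem_upperFlag_bot e lam htri htri2 x hsq)
  have hB : y * (x * (x * x)) - lam k • y ∈ upperFlag e k := by
    have hdecomp : y * (x * (x * x)) - lam k • y = (x * y - lam k • y) + y * s + y * (x * s) := by
      simp only [s, mul_sub, mul_comm y x]
      abel
    rw [hdecomp]
    exact add_mem (add_mem h1 hys) hyxs
  have hC : x * (y * (x * x)) - (lam k * lam k) • y ∈ upperFlag e k := by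
    have hdecomp : x * (y * (x * x)) - (lam k * lam k) • y
        = (x * (x * y) - (lam k * lam k) • y) + x * (y * s) := by
      simp only [s, mul_sub, mul_comm y x]
      abel
    rw [hdecomp]
    exact add_mem h2 (mul_mem_upperFlag_of_triangular e lam htri hys)
  have hcoord := congrArg (fun v => e.repr v k) (hLT x y)
  simp only [map_add, map_nsmul, Finsupp.add_apply, Finsupp.smul_apply, nsmul_eq_mul,
    repr_self_of_sub_mem_upperFlag e h3, repr_self_of_sub_mem_upperFlag e hB,
    repr_self_of_sub_mem_upperFlag e hC] at hcoord
  push_cast at hcoord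
  linear_combination hcoord

end Eigenvalues

lemma eq_zero_or_eq_inv_two_or_eq_one_of_cubic {K : Type*} [Field K] {x : K}
    (h : 2 * x ^ 3 + x = 3 * x ^ 2) : x = 0 ∨ x = 2⁻¹ ∨ x = 1 := by
  have hfactor : x * ((2 * x - 1) * (x - 1)) = 0 := by linear_combination h
  rcases mul_eq_zero.1 hfactor with h0 | h
  · exact Or.inl h0
  rcases mul_eq_zero.1 h with h1 | h1
  · exact Or.inr (Or.inl (eq_inv_of_mul_eq_one_right (by linear_combination h1)))
  · exact Or.inr (Or.inr (by linear_combination h1))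

theorem eigenvalues_of_Le0_general {K A : Type*} [Field K]
    [NonUnitalNonAssocCommRing A] [Module K A] [SMulCommClass K A A] [IsScalarTower K A A]
    (h2 : (2 : K) ≠ 0)
    (n : ℕ)
    (e : Module.Basis (Fin (n + 1)) K A)
    (hLT : ∀ x y : A, 2 • (x * (x * (x * y))) + y * (x * (x * x)) = 3 • (x * (y * (x * x))))
    (hidem : e 0 * e 0 = e 0 ∨ ∃ t : A, t ≠ 0 ∧ e 0 * e 0 = e 0 + t ∧
      e 0 * t = (2 : K)⁻¹ • t ∧ t * t = 0)
    (lam : Fin (n + 1) → K)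
    (htri : ∀ k : Fin (n + 1), 1 ≤ (k : ℕ) →
      e 0 * e k - lam k • e k ∈ Submodule.span K (e '' {i | (k : ℕ) < (i : ℕ)}))
    (htri2 : ∀ i k : Fin (n + 1), 1 ≤ (i : ℕ) → (i : ℕ) ≤ (k : ℕ) →
      e i * e k ∈ Submodule.span K (e '' {j | (k : ℕ) < (j : ℕ)})) :
    ∀ k : Fin (n + 1), 1 ≤ (k : ℕ) →
      lam k = 0 ∨ lam k = (2 : K)⁻¹ ∨ lam k = 1 := fun _ hk =>
  eq_zero_or_eq_inv_two_or_eq_one_of_cubic <|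
    two_mul_cube_add_eq_three_mul_sq e lam htri htri2 hLT
      (mul_self_sub_mem_upperFlag_bot e lam htri htri2 h2 hidem) hk

/-- In a dimensionally nilpotent Lie triple non-nil algebra with adapted basis and
e_0 (pseudo-)idempotent, writing e_0e_k = λ_k e_k + (terms in e_{k+1},…,e_n) and
e_ie_k ∈ span{e_{k+1},…,e_n}, the eigenvalue λ_k lies in {0, 1/2, 1} for 1 ≤ k ≤ n. -/
theorem eigenvalues_of_Le0 {K A : Type*} [Field K]
    [NonUnitalNonAssocCommRing A] [Module K A] [SMulCommClass K A A] [IsScalarTower K A A]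
    (h2 : (2 : K) ≠ 0) (h3 : (3 : K) ≠ 0)
    (n : ℕ) (hn : 1 ≤ n)
    (e : Module.Basis (Fin (n + 1)) K A)
    (hLT : ∀ x y : A, 2 • (x * (x * (x * y))) + y * (x * (x * x)) = 3 • (x * (y * (x * x))))
    (d : Module.End K A) (hd : ∀ x y : A, d (x * y) = d x * y + x * d y)
    (hadapt : ∀ i : Fin (n + 1), ∀ hi : (i : ℕ) < n,
      d (e i) = e ⟨(i : ℕ) + 1, Nat.succ_lt_succ hi⟩)
    (hdtop : d (e ⟨n, Nat.lt_succ_self n⟩) = 0)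
    (hidem : e 0 * e 0 = e 0 ∨ ∃ t : A, t ≠ 0 ∧ e 0 * e 0 = e 0 + t ∧
      e 0 * t = (2 : K)⁻¹ • t ∧ t * t = 0)
    (lam : Fin (n + 1) → K)
    (htri : ∀ k : Fin (n + 1), 1 ≤ (k : ℕ) →
      e 0 * e k - lam k • e k ∈ Submodule.span K (e '' {i | (k : ℕ) < (i : ℕ)}))
    (htri2 : ∀ i k : Fin (n + 1), 1 ≤ (i : ℕ) → (i : ℕ) ≤ (k : ℕ) →
      e i * e k ∈ Submodule.span K (e '' {j | (k : ℕ) < (j : ℕ)})) :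
    ∀ k : Fin (n + 1), 1 ≤ (k : ℕ) →
      lam k = 0 ∨ lam k = (2 : K)⁻¹ ∨ lam k = 1 :=
  eigenvalues_of_Le0_general h2 n e hLT hidem lam htri htri2
end

section
/- The 2-dimensional commutative algebra over a field K of characteristic ≠ 2 with basis {e_0, e_1}, products e_0² = e_0 + e_1, e_0e_1 = ½e_1, e_1² = 0, is a Lie triple algebra that is not a Jordan algebra, and it is dimensionally nilpotent via d(e_0) = e_1, d(e_1) = 0. -/
/-!
Writing `x = a e₀ + b e₁`, the product is `(a e₀ + b e₁)(c e₀ + d e₁) = ac e₀ + (ac + ½(ad + bc)) e₁`,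
so both identities reduce to polynomial identities in the coordinates: the Lie triple identity holds
identically, while the Jordan identity at `x = y = e₀` compares the `e₁`-coordinates `2` and `7/4`.
The map `a e₀ + b e₁ ↦ a e₁` is a derivation because `e₀ e₁ = ½ e₁` makes `2 e₀ e₁ = e₁`.
-/

open Module

theorem Module.Basis.exists_eq_smul_add_smul {K M : Type*} [Semiring K] [AddCommMonoid M]
    [Module K M] (e : Basis (Fin 2) K M) (x : M) : ∃ a b : K, x = a • e 0 + b • e 1 :=
  ⟨e.repr x 0, e.repr x 1, by simpa only [Fin.sum_univ_two] using (e.sum_repr x).symm⟩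

theorem Module.Basis.repr_smul_add_smul_one {K M : Type*} [Semiring K] [AddCommMonoid M]
    [Module K M] (e : Basis (Fin 2) K M) (a b : K) : e.repr (a • e 0 + b • e 1) 1 = b := by
  simp

namespace DimTwoLieTriple

section Shift

variable {K M : Type*} [CommSemiring K] [AddCommMonoid M] [Module K M] {e : Basis (Fin 2) K M}

variable (e) in
noncomputable def shift : End K M := e.constr K ![e 1, 0]

theorem shift_basis_zero : shift e (e 0) = e 1 := by
  simp [shift]

theorem shift_basis_one : shift e (e 1) = 0 := by
  simp [shift]

theorem shift_smul_add_smul (a b : K) : shift e (a • e 0 + b • e 1) = a • e 1 := by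
  simp [shift_basis_zero, shift_basis_one]

theorem shift_sq : shift e ^ 2 = 0 :=
  e.ext fun i => by fin_cases i <;> simp [pow_two, shift_basis_zero, shift_basis_one]

theorem shift_ne_zero [Nontrivial K] : shift e ≠ 0 := fun h =>
  e.ne_zero 1 (by rw [← shift_basis_zero, h, LinearMap.zero_apply])

end Shift

variable {K A : Type*} [Field K] [NonUnitalNonAssocCommRing A] [Module K A]
  [SMulCommClass K A A] [IsScalarTower K A A] {e : Basis (Fin 2) K A}

theorem mul_smul_add_smul (h00 : e 0 * e 0 = e 0 + e 1) (h01 : e 0 * e 1 = (2 : K)⁻¹ • e 1)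
    (h11 : e 1 * e 1 = 0) (a b c d : K) :
    (a • e 0 + b • e 1) * (c • e 0 + d • e 1) =
      (a * c) • e 0 + (a * c + (2 : K)⁻¹ * (a * d + b * c)) • e 1 := by
  have h10 : e 1 * e 0 = (2 : K)⁻¹ • e 1 := by rw [mul_comm, h01]
  simp only [add_mul, mul_add, smul_mul_smul_comm, h00, h01, h10, h11]
  match_scalars <;> ring

theorem lie_triple_identity (h2 : (2 : K) ≠ 0) (h00 : e 0 * e 0 = e 0 + e 1)
    (h01 : e 0 * e 1 = (2 : K)⁻¹ • e 1) (h11 : e 1 * e 1 = 0) (x y : A) :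
    2 • (x * (x * (x * y))) + y * (x * (x * x)) = 3 • (x * (y * (x * x))) := by
  obtain ⟨a, b, rfl⟩ := e.exists_eq_smul_add_smul x
  obtain ⟨c, d, rfl⟩ := e.exists_eq_smul_add_smul y
  simp only [mul_smul_add_smul h00 h01 h11, ← Nat.cast_smul_eq_nsmul K]
  match_scalars <;> field_simp <;> ring

theorem not_jordan (h2 : (2 : K) ≠ 0) (h00 : e 0 * e 0 = e 0 + e 1)
    (h01 : e 0 * e 1 = (2 : K)⁻¹ • e 1) (h11 : e 1 * e 1 = 0) :
    ¬∀ x y : A, (x * x) * (y * x) = ((x * x) * y) * x := by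
  intro h
  have hjordan := congrArg (fun z => e.repr z 1)
    (h ((1 : K) • e 0 + (0 : K) • e 1) ((1 : K) • e 0 + (0 : K) • e 1))
  simp only [mul_smul_add_smul h00 h01 h11, e.repr_smul_add_smul_one] at hjordan
  field_simp at hjordan
  exact h2 (by linear_combination hjordan)

theorem shift_mul (h2 : (2 : K) ≠ 0) (h00 : e 0 * e 0 = e 0 + e 1)
    (h01 : e 0 * e 1 = (2 : K)⁻¹ • e 1) (h11 : e 1 * e 1 = 0) (x y : A) :
    shift e (x * y) = shift e x * y + x * shift e y := by
  obtain ⟨a, b, rfl⟩ := e.exists_eq_smul_add_smul x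
  obtain ⟨c, d, rfl⟩ := e.exists_eq_smul_add_smul y
  have he1 (t : K) : t • e 1 = (0 : K) • e 0 + t • e 1 := by rw [zero_smul, zero_add]
  rw [mul_smul_add_smul h00 h01 h11, shift_smul_add_smul, shift_smul_add_smul,
    shift_smul_add_smul, he1 a, he1 c, mul_smul_add_smul h00 h01 h11,
    mul_smul_add_smul h00 h01 h11]
  match_scalars <;> field_simp <;> ring

end DimTwoLieTriple

/-- The 2-dimensional algebra with e_0² = e_0 + e_1, e_0e_1 = ½e_1, e_1² = 0 is a
Lie triple algebra which is not a Jordan algebra, and is dimensionally nilpotent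
via d(e_0) = e_1, d(e_1) = 0. -/
theorem dim2_lie_triple_not_jordan {K A : Type*} [Field K]
    [NonUnitalNonAssocCommRing A] [Module K A] [SMulCommClass K A A] [IsScalarTower K A A]
    (h2 : (2 : K) ≠ 0)
    (e : Module.Basis (Fin 2) K A)
    (h00 : e 0 * e 0 = e 0 + e 1)
    (h01 : e 0 * e 1 = (2 : K)⁻¹ • e 1)
    (h11 : e 1 * e 1 = 0) :
    (∀ x y : A, 2 • (x * (x * (x * y))) + y * (x * (x * x)) = 3 • (x * (y * (x * x)))) ∧
    ¬(∀ x y : A, (x * x) * (y * x) = ((x * x) * y) * x) ∧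
    ∃ d : Module.End K A, (∀ x y : A, d (x * y) = d x * y + x * d y) ∧
      d (e 0) = e 1 ∧ d (e 1) = 0 ∧ d ^ 2 = 0 ∧ d ≠ 0 := by
  open DimTwoLieTriple in
  exact ⟨lie_triple_identity h2 h00 h01 h11, not_jordan h2 h00 h01 h11, shift e,
    shift_mul h2 h00 h01 h11, shift_basis_zero, shift_basis_one, shift_sq, shift_ne_zero⟩
end

section
/- The 3-dimensional commutative algebra over a field K of characteristic ≠ 2 with basis {e_0,e_1,e_2} and products e_0² = e_0, e_0e_1 = ½e_1, e_1² = ½e_2, e_0e_2 = 0, all other products zero, is a Jordan algebra (hence a Lie triple algebra) and is dimensionally nilpotent via d(e_0) = e_1, d(e_1) = e_2, d(e_2) = 0. -/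
/-! Every element is a combination `a₀ e₀ + a₁ e₁ + a₂ e₂`, and the product of two such is
`(a₀b₀) e₀ + ½(a₀b₁ + a₁b₀) e₁ + ½(a₁b₁) e₂`. Both identities and the Leibniz rule for the
shift `e₀ ↦ e₁ ↦ e₂ ↦ 0` thus reduce to polynomial identities in the coordinates; the shift
kills `e₀` after three steps but not after two. -/

open Module

namespace Dim3Jordan

variable {K A : Type*} [Field K] [NonUnitalNonAssocCommRing A] [Module K A]

structure IsMulTable (e : Basis (Fin 3) K A) : Prop where
  mul_00 : e 0 * e 0 = e 0
  mul_01 : e 0 * e 1 = (2 : K)⁻¹ • e 1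
  mul_11 : e 1 * e 1 = (2 : K)⁻¹ • e 2
  mul_02 : e 0 * e 2 = 0
  mul_12 : e 1 * e 2 = 0
  mul_22 : e 2 * e 2 = 0

lemma eq_linComb (e : Basis (Fin 3) K A) (x : A) :
    x = e.repr x 0 • e 0 + e.repr x 1 • e 1 + e.repr x 2 • e 2 :=
  (e.sum_repr x).symm.trans (Fin.sum_univ_three _)

noncomputable def shift (e : Basis (Fin 3) K A) : Module.End K A :=
  e.constr K ![e 1, e 2, 0]

@[simp] lemma shift_e0 (e : Basis (Fin 3) K A) : shift e (e 0) = e 1 := by simp [shift]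

@[simp] lemma shift_e1 (e : Basis (Fin 3) K A) : shift e (e 1) = e 2 := by simp [shift]

@[simp] lemma shift_e2 (e : Basis (Fin 3) K A) : shift e (e 2) = 0 := by simp [shift]

-- The `0 • e 0` keeps the image in the shape `linComb_mul_linComb` rewrites.
lemma shift_linComb (e : Basis (Fin 3) K A) (a₀ a₁ a₂ : K) :
    shift e (a₀ • e 0 + a₁ • e 1 + a₂ • e 2) = (0 : K) • e 0 + a₀ • e 1 + a₁ • e 2 := by
  simp

lemma shift_pow_three (e : Basis (Fin 3) K A) : shift e ^ 3 = 0 :=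
  e.ext fun i => by fin_cases i <;> simp [pow_succ]

lemma shift_sq_ne_zero (e : Basis (Fin 3) K A) : shift e ^ 2 ≠ 0 := fun h =>
  e.ne_zero 2 <| by simpa [pow_succ] using LinearMap.congr_fun h (e 0)

variable [SMulCommClass K A A] [IsScalarTower K A A] {e : Basis (Fin 3) K A}

lemma IsMulTable.linComb_mul_linComb (he : IsMulTable e) (a₀ a₁ a₂ b₀ b₁ b₂ : K) :
    (a₀ • e 0 + a₁ • e 1 + a₂ • e 2) * (b₀ • e 0 + b₁ • e 1 + b₂ • e 2) =
      (a₀ * b₀) • e 0 + ((2 : K)⁻¹ * (a₀ * b₁ + a₁ * b₀)) • e 1 + ((2 : K)⁻¹ * (a₁ * b₁)) • e 2 := by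
  have mul_10 : e 1 * e 0 = (2 : K)⁻¹ • e 1 := by rw [mul_comm, he.mul_01]
  have mul_20 : e 2 * e 0 = 0 := by rw [mul_comm, he.mul_02]
  have mul_21 : e 2 * e 1 = 0 := by rw [mul_comm, he.mul_12]
  simp only [add_mul, mul_add, smul_mul_assoc, mul_smul_comm, he.mul_00, he.mul_01, he.mul_11,
    he.mul_02, he.mul_12, he.mul_22, mul_10, mul_20, mul_21, smul_zero, add_zero]
  match_scalars <;> ring

theorem IsMulTable.jordan (h2 : (2 : K) ≠ 0) (he : IsMulTable e) (x y : A) :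
    (x * x) * (y * x) = ((x * x) * y) * x := by
  rw [eq_linComb e x, eq_linComb e y]
  simp only [he.linComb_mul_linComb]
  match_scalars <;> field_simp <;> ring

theorem IsMulTable.lieTriple (h2 : (2 : K) ≠ 0) (he : IsMulTable e) (x y : A) :
    2 • (x * (x * (x * y))) + y * (x * (x * x)) = 3 • (x * (y * (x * x))) := by
  rw [eq_linComb e x, eq_linComb e y]
  simp only [he.linComb_mul_linComb]
  match_scalars <;> field_simp <;> ring

theorem IsMulTable.shift_mul (h2 : (2 : K) ≠ 0) (he : IsMulTable e) (x y : A) :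
    shift e (x * y) = shift e x * y + x * shift e y := by
  rw [eq_linComb e x, eq_linComb e y]
  simp only [he.linComb_mul_linComb, shift_linComb]
  match_scalars <;> field_simp <;> ring

end Dim3Jordan

/-- The 3-dimensional algebra with e_0² = e_0, e_0e_1 = ½e_1, e_1² = ½e_2,
e_0e_2 = 0 and all other products zero is a Jordan algebra (hence a Lie triple
algebra) and is dimensionally nilpotent via d(e_0) = e_1, d(e_1) = e_2, d(e_2) = 0. -/
theorem dim3_jordan_case_lambda0 {K A : Type*} [Field K]
    [NonUnitalNonAssocCommRing A] [Module K A] [SMulCommClass K A A] [IsScalarTower K A A]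
    (h2 : (2 : K) ≠ 0)
    (e : Module.Basis (Fin 3) K A)
    (h00 : e 0 * e 0 = e 0)
    (h01 : e 0 * e 1 = (2 : K)⁻¹ • e 1)
    (h11 : e 1 * e 1 = (2 : K)⁻¹ • e 2)
    (h02 : e 0 * e 2 = 0)
    (h12 : e 1 * e 2 = 0)
    (h22 : e 2 * e 2 = 0) :
    (∀ x y : A, (x * x) * (y * x) = ((x * x) * y) * x) ∧
    (∀ x y : A, 2 • (x * (x * (x * y))) + y * (x * (x * x)) = 3 • (x * (y * (x * x)))) ∧
    ∃ d : Module.End K A, (∀ x y : A, d (x * y) = d x * y + x * d y) ∧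
      d (e 0) = e 1 ∧ d (e 1) = e 2 ∧ d (e 2) = 0 ∧ d ^ 3 = 0 ∧ d ^ 2 ≠ 0 := by
  open Dim3Jordan in
  have he : IsMulTable e := ⟨h00, h01, h11, h02, h12, h22⟩
  exact ⟨he.jordan h2, he.lieTriple h2,
    shift e, he.shift_mul h2, shift_e0 e, shift_e1 e, shift_e2 e, shift_pow_three e, shift_sq_ne_zero e⟩
end

section
/- The 3-dimensional commutative algebra with basis {e_0,e_1,e_2} and products e_0² = e_0, e_0e_1 = ½e_1, e_0e_2 = e_2, e_1² = −½e_2, all other products zero, over a field of characteristic ≠ 2, is a Jordan algebra and dimensionally nilpotent via d(e_i) = e_{i+1}, d(e_2) = 0. -/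
/-!
In coordinates with respect to `e`, the product is
`(a, b, c) * (p, q, r) = (a p, (a q + b p) / 2, a r + c p - b q / 2)`, so the Jordan identity and
the Leibniz rule for the shift `(a, b, c) ↦ (0, a, b)` become polynomial identities in the
coordinates, which hold once `2` is invertible.
-/

section

variable {K A : Type*} [Field K] [NonUnitalNonAssocCommRing A] [Module K A]

def ofCoords (e : Fin 3 → A) (a b c : K) : A := a • e 0 + b • e 1 + c • e 2

theorem ofCoords_add (e : Fin 3 → A) (a b c a' b' c' : K) :
    ofCoords e a b c + ofCoords e a' b' c' = ofCoords e (a + a') (b + b') (c + c') := by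
  simp only [ofCoords]
  module

theorem Module.Basis.exists_eq_ofCoords (e : Module.Basis (Fin 3) K A) (x : A) :
    ∃ a b c : K, x = ofCoords e a b c :=
  ⟨e.repr x 0, e.repr x 1, e.repr x 2, by
    rw [ofCoords, ← Fin.sum_univ_three (fun i => e.repr x i • e i), e.sum_repr]⟩

theorem ofCoords_mul_ofCoords [SMulCommClass K A A] [IsScalarTower K A A] {e : Fin 3 → A}
    (h00 : e 0 * e 0 = e 0) (h01 : e 0 * e 1 = (2 : K)⁻¹ • e 1) (h02 : e 0 * e 2 = e 2)
    (h11 : e 1 * e 1 = -((2 : K)⁻¹ • e 2)) (h12 : e 1 * e 2 = 0) (h22 : e 2 * e 2 = 0)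
    (a b c p q r : K) :
    ofCoords e a b c * ofCoords e p q r =
      ofCoords e (a * p) (2⁻¹ * (a * q + b * p)) (a * r + c * p - 2⁻¹ * (b * q)) := by
  have h10 : e 1 * e 0 = (2 : K)⁻¹ • e 1 := by rw [mul_comm, h01]
  have h20 : e 2 * e 0 = e 2 := by rw [mul_comm, h02]
  have h21 : e 2 * e 1 = 0 := by rw [mul_comm, h12]
  simp only [ofCoords, add_mul, mul_add, smul_mul_assoc, mul_smul_comm, h00, h01, h02, h10, h11,
    h12, h20, h21, h22]
  module

theorem jordan_identity_of_mul_ofCoords (e : Module.Basis (Fin 3) K A) (h2 : (2 : K) ≠ 0)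
    (hmul : ∀ a b c p q r : K, ofCoords e a b c * ofCoords e p q r =
      ofCoords e (a * p) (2⁻¹ * (a * q + b * p)) (a * r + c * p - 2⁻¹ * (b * q)))
    (x y : A) : (x * x) * (y * x) = ((x * x) * y) * x := by
  obtain ⟨a, b, c, rfl⟩ := e.exists_eq_ofCoords x
  obtain ⟨p, q, r, rfl⟩ := e.exists_eq_ofCoords y
  simp only [hmul]
  congr 1 <;> field_simp <;> ring

noncomputable def Module.Basis.shift_s13 (e : Module.Basis (Fin 3) K A) : Module.End K A :=
  e.constr K ![e 1, e 2, 0]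

theorem Module.Basis.shift_ofCoords (e : Module.Basis (Fin 3) K A) (a b c : K) :
    e.shift_s13 (ofCoords e a b c) = ofCoords e 0 a b := by
  simp only [Module.Basis.shift_s13, ofCoords, map_add, map_smul, Module.Basis.constr_basis]
  simp

theorem Module.Basis.shift_mul (e : Module.Basis (Fin 3) K A) (h2 : (2 : K) ≠ 0)
    (hmul : ∀ a b c p q r : K, ofCoords e a b c * ofCoords e p q r =
      ofCoords e (a * p) (2⁻¹ * (a * q + b * p)) (a * r + c * p - 2⁻¹ * (b * q)))
    (x y : A) : e.shift_s13 (x * y) = e.shift_s13 x * y + x * e.shift_s13 y := by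
  obtain ⟨a, b, c, rfl⟩ := e.exists_eq_ofCoords x
  obtain ⟨p, q, r, rfl⟩ := e.exists_eq_ofCoords y
  simp only [hmul, e.shift_ofCoords, ofCoords_add]
  congr 1 <;> field_simp <;> ring

theorem Module.Basis.shift_pow_three (e : Module.Basis (Fin 3) K A) : e.shift_s13 ^ 3 = 0 := by
  refine LinearMap.ext fun x => ?_
  obtain ⟨a, b, c, rfl⟩ := e.exists_eq_ofCoords x
  simp only [pow_succ, pow_zero, one_mul, Module.End.mul_apply, e.shift_ofCoords]
  simp [ofCoords]

theorem Module.Basis.shift_sq_ne_zero (e : Module.Basis (Fin 3) K A) : e.shift_s13 ^ 2 ≠ 0 := by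
  intro h
  have h02 : (e.shift_s13 ^ 2) (ofCoords e (1 : K) 0 0) = e 2 := by
    simp only [pow_succ, pow_zero, one_mul, Module.End.mul_apply, e.shift_ofCoords]
    simp [ofCoords]
  exact e.ne_zero 2 (by simpa [h] using h02.symm)

end

/-- The 3-dimensional algebra with e_0² = e_0, e_0e_1 = ½e_1, e_0e_2 = e_2,
e_1² = −½e_2 and all other products zero is a Jordan algebra and is dimensionally
nilpotent via d(e_0) = e_1, d(e_1) = e_2, d(e_2) = 0. -/
theorem dim3_jordan_case_lambda1 {K A : Type*} [Field K]
    [NonUnitalNonAssocCommRing A] [Module K A] [SMulCommClass K A A] [IsScalarTower K A A]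
    (h2 : (2 : K) ≠ 0)
    (e : Module.Basis (Fin 3) K A)
    (h00 : e 0 * e 0 = e 0)
    (h01 : e 0 * e 1 = (2 : K)⁻¹ • e 1)
    (h02 : e 0 * e 2 = e 2)
    (h11 : e 1 * e 1 = -((2 : K)⁻¹ • e 2))
    (h12 : e 1 * e 2 = 0)
    (h22 : e 2 * e 2 = 0) :
    (∀ x y : A, (x * x) * (y * x) = ((x * x) * y) * x) ∧
    ∃ d : Module.End K A, (∀ x y : A, d (x * y) = d x * y + x * d y) ∧
      d (e 0) = e 1 ∧ d (e 1) = e 2 ∧ d (e 2) = 0 ∧ d ^ 3 = 0 ∧ d ^ 2 ≠ 0 := by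
  have hmul := ofCoords_mul_ofCoords h00 h01 h02 h11 h12 h22
  refine ⟨jordan_identity_of_mul_ofCoords e h2 hmul,
    e.shift_s13, e.shift_mul h2 hmul, ?_, ?_, ?_, e.shift_pow_three, e.shift_sq_ne_zero⟩ <;>
    simp [Module.Basis.shift_s13]
end

section
/- Let A be the (2p+1)-dimensional commutative algebra over a field K of characteristic ≠ 2 with basis {e_0,…,e_{2p}} and products e_0² = e_0, e_0e_i = ½e_i (1 ≤ i ≤ 2p−1), e_0e_{2p} = 0, e_i e_{2p−i} = ½(−1)^{i−1} e_{2p} (1 ≤ i ≤ p), all other products zero. Then A is a Jordan algebra and satisfies the train equation x³ − ω(x)x² = 0 where ω : A → K is the algebra homomorphism with ω(e_0) = 1 and ω(e_i) = 0 for i ≥ 1. -/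
set_option maxHeartbeats 1600000 in
/-- The (2p+1)-dimensional algebra with e_0² = e_0, e_0e_i = ½e_i (1 ≤ i ≤ 2p−1),
e_0e_{2p} = 0, e_ie_{2p−i} = ½(−1)^{i−1}e_{2p} (1 ≤ i ≤ p) and all other products
zero is a Jordan algebra satisfying the train equation x³ − ω(x)x² = 0, where ω is
the weight homomorphism with ω(e_0) = 1 and ω(e_i) = 0 for i ≥ 1. -/
theorem normal_bernstein_jordan_train {K A : Type*} [Field K]
    [NonUnitalNonAssocCommRing A] [Module K A] [SMulCommClass K A A] [IsScalarTower K A A]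
    (h2 : (2 : K) ≠ 0) (p : ℕ) (hp : 1 ≤ p)
    (e : Module.Basis (Fin (2 * p + 1)) K A)
    (h00 : e 0 * e 0 = e 0)
    (h0i : ∀ i : Fin (2 * p + 1), 1 ≤ (i : ℕ) → (i : ℕ) ≤ 2 * p - 1 →
      e 0 * e i = (2 : K)⁻¹ • e i)
    (h0top : e 0 * e ⟨2 * p, Nat.lt_succ_self _⟩ = 0)
    (hpair : ∀ i j : Fin (2 * p + 1), 1 ≤ (i : ℕ) → 1 ≤ (j : ℕ) →
      (i : ℕ) + (j : ℕ) = 2 * p →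
      e i * e j = ((2 : K)⁻¹ * (-1 : K) ^ ((i : ℕ) - 1)) • e ⟨2 * p, Nat.lt_succ_self _⟩)
    (hzero : ∀ i j : Fin (2 * p + 1), 1 ≤ (i : ℕ) → 1 ≤ (j : ℕ) →
      (i : ℕ) + (j : ℕ) ≠ 2 * p → e i * e j = 0) :
    (∀ x y : A, (x * x) * (y * x) = ((x * x) * y) * x) ∧
    ∃ ω : A →ₗ[K] K, (∀ x y : A, ω (x * y) = ω x * ω y) ∧ ω (e 0) = 1 ∧
      (∀ i : Fin (2 * p + 1), 1 ≤ (i : ℕ) → ω (e i) = 0) ∧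
      ∀ x : A, x * (x * x) - ω x • (x * x) = 0 := by
  set tp : Fin (2 * p + 1) := ⟨2 * p, Nat.lt_succ_self _⟩ with htpdef
  have htpval : (tp : ℕ) = 2 * p := rfl
  have htp0 : tp ≠ 0 := by
    intro h
    have := congrArg Fin.val h
    simp [htpval] at this
    omega
  -- induction principle over the whole space via the basis
  have hbasisP : ∀ (P : A → Prop), P 0 → (∀ x y, P x → P y → P (x + y)) →
      (∀ (c : K) x, P x → P (c • x)) → (∀ i, P (e i)) → ∀ x, P x := by
    intro P h0 hadd hsmul hb x
    have hx : x ∈ Submodule.span K (Set.range ⇑e) := by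
      rw [e.span_eq]; exact Submodule.mem_top
    exact Submodule.span_induction
      (fun z hz => by obtain ⟨i, rfl⟩ := hz; exact hb i) h0
      (fun x y _ _ hx hy => hadd x y hx hy)
      (fun c x _ hx => hsmul c x hx) hx
  -- n := e tp annihilates everything
  have hn : ∀ z : A, e tp * z = 0 := by
    refine hbasisP _ (mul_zero _) ?_ ?_ ?_
    · intro x y hx hy; rw [mul_add, hx, hy, add_zero]
    · intro c x hx; rw [mul_smul_comm, hx, smul_zero]
    · intro i
      by_cases hi : i = 0
      · subst hi; rw [mul_comm]; exact h0top
      · have h1 : 1 ≤ (i : ℕ) := by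
          rcases Nat.eq_zero_or_pos (i : ℕ) with h | h
          · exact absurd (Fin.ext (by simp [h])) hi
          · exact h
        refine hzero tp i (by omega) h1 (by omega)
  -- the subspace U spanned by the middle basis vectors
  set S : Set A := {z : A | ∃ i : Fin (2 * p + 1), (1 ≤ (i : ℕ) ∧ (i : ℕ) ≤ 2 * p - 1) ∧ z = e i}
    with hSdef
  set U : Submodule K A := Submodule.span K S with hUdef
  set N : Submodule K A := Submodule.span K {e tp} with hNdef
  have hUind : ∀ (P : A → Prop), P 0 → (∀ x y, P x → P y → P (x + y)) →
      (∀ (c : K) x, P x → P (c • x)) →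
      (∀ i : Fin (2 * p + 1), 1 ≤ (i : ℕ) → (i : ℕ) ≤ 2 * p - 1 → P (e i)) →
      ∀ u ∈ U, P u := by
    intro P h0 hadd hsmul hb u hu
    exact Submodule.span_induction
      (fun z hz => by obtain ⟨i, ⟨h1, h2'⟩, rfl⟩ := hz; exact hb i h1 h2') h0
      (fun x y _ _ hx hy => hadd x y hx hy)
      (fun c x _ hx => hsmul c x hx) hu
  -- e 0 acts as 1/2 on U
  have hU0 : ∀ u ∈ U, e 0 * u = (2 : K)⁻¹ • u := by
    refine hUind _ (by rw [mul_zero, smul_zero]) ?_ ?_ ?_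
    · intro x y hx hy; rw [mul_add, hx, hy, smul_add]
    · intro c x hx; rw [mul_smul_comm, hx, smul_comm]
    · intro i h1 h2'; exact h0i i h1 h2'
  -- products of U elements land in N
  have hUU : ∀ u ∈ U, ∀ v ∈ U, u * v ∈ N := by
    refine hUind _ ?_ ?_ ?_ ?_
    · intro v _; rw [zero_mul]; exact N.zero_mem
    · intro x y hx hy v hv; rw [add_mul]; exact N.add_mem (hx v hv) (hy v hv)
    · intro c x hx v hv; rw [smul_mul_assoc]; exact N.smul_mem _ (hx v hv)
    · intro i h1 h2' 
      refine hUind _ ?_ ?_ ?_ ?_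
      · rw [mul_zero]; exact N.zero_mem
      · intro x y hx hy; rw [mul_add]; exact N.add_mem hx hy
      · intro c x hx; rw [mul_smul_comm]; exact N.smul_mem _ hx
      · intro j h1' h2''
        by_cases hij : (i : ℕ) + (j : ℕ) = 2 * p
        · rw [hpair i j h1 h1' hij]
          exact N.smul_mem _ (Submodule.mem_span_singleton_self _)
        · rw [hzero i j h1 h1' hij]; exact N.zero_mem
  -- coordinate values
  have hc00 : e.coord 0 (e 0) = 1 := by
    simp [Module.Basis.coord_apply, Module.Basis.repr_self_apply]
  have hc0tp : e.coord 0 (e tp) = 0 := by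
    simp [Module.Basis.coord_apply, Module.Basis.repr_self_apply, htp0]
  have hctp0 : e.coord tp (e 0) = 0 := by
    simp [Module.Basis.coord_apply, Module.Basis.repr_self_apply, Ne.symm htp0]
  have hctptp : e.coord tp (e tp) = 1 := by
    simp [Module.Basis.coord_apply, Module.Basis.repr_self_apply]
  have hc0U : ∀ u ∈ U, e.coord 0 u = 0 := by
    refine hUind _ (by simp) ?_ ?_ ?_
    · intro x y hx hy; rw [map_add, hx, hy, add_zero]
    · intro c x hx; rw [map_smul, hx, smul_zero]
    · intro i h1 _
      have hi : i ≠ 0 := by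
        intro h; rw [h] at h1; simp at h1
      simp [Module.Basis.coord_apply, Module.Basis.repr_self_apply, hi]
  -- decomposition of an arbitrary element
  have hdec : ∀ x : A, ∃ (a b : K) (u : A), u ∈ U ∧
      x = a • e 0 + u + b • e tp ∧ e.coord 0 x = a := by
    intro x
    refine ⟨e.coord 0 x, e.coord tp x, x - e.coord 0 x • e 0 - e.coord tp x • e tp, ?_, by abel,
      rfl⟩
    refine hbasisP (fun z => z - e.coord 0 z • e 0 - e.coord tp z • e tp ∈ U) ?_ ?_ ?_ ?_ x
    · simp
    · intro x y hx hy
      have heq : x + y - e.coord 0 (x + y) • e 0 - e.coord tp (x + y) • e tp =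
          (x - e.coord 0 x • e 0 - e.coord tp x • e tp) +
          (y - e.coord 0 y • e 0 - e.coord tp y • e tp) := by
        simp only [map_add, add_smul]; abel
      rw [heq]; exact U.add_mem hx hy
    · intro c x hx
      have heq : c • x - e.coord 0 (c • x) • e 0 - e.coord tp (c • x) • e tp =
          c • (x - e.coord 0 x • e 0 - e.coord tp x • e tp) := by
        simp only [map_smul, smul_eq_mul, mul_smul, smul_sub]
      rw [heq]; exact U.smul_mem _ hx
    · intro i
      by_cases hi0 : i = 0
      · subst hi0
        rw [hc00, hctp0, one_smul, zero_smul, sub_zero, sub_self]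
        exact U.zero_mem
      · by_cases hit : i = tp
        · subst hit
          rw [hc0tp, hctptp, one_smul, zero_smul, sub_zero, sub_self]
          exact U.zero_mem
        · have hiv1 : 1 ≤ (i : ℕ) := by
            rcases Nat.eq_zero_or_pos (i : ℕ) with h | h
            · exact absurd (Fin.ext (by simp [h])) hi0
            · exact h
          have hiv2 : (i : ℕ) ≤ 2 * p - 1 := by
            have hlt : (i : ℕ) < 2 * p + 1 := i.isLt
            have hne : (i : ℕ) ≠ 2 * p := by
              intro h; exact hit (Fin.ext (by rw [h, htpval]))
            omega
          have hcoord0 : e.coord 0 (e i) = 0 := by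
            simp [Module.Basis.coord_apply, Module.Basis.repr_self_apply, hi0]
          have hcoordtp : e.coord tp (e i) = 0 := by
            simp [Module.Basis.coord_apply, Module.Basis.repr_self_apply, hit]
          rw [hcoord0, hcoordtp, zero_smul, zero_smul, sub_zero, sub_zero]
          exact Submodule.subset_span ⟨i, ⟨hiv1, hiv2⟩, rfl⟩
  constructor
  · -- the Jordan identity
    intro x y
    obtain ⟨a, b, u, hu, hxd, _⟩ := hdec x
    obtain ⟨c, d, v, hv, hyd, _⟩ := hdec y
    obtain ⟨α, hα⟩ := Submodule.mem_span_singleton.mp (hUU u hu u hu)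
    obtain ⟨β, hβ⟩ := Submodule.mem_span_singleton.mp (hUU u hu v hv)
    have hα' : u * u = α • e tp := hα.symm
    have hβ' : u * v = β • e tp := hβ.symm
    have hvu : v * u = β • e tp := by rw [mul_comm]; exact hβ'
    have he0u : e 0 * u = (2 : K)⁻¹ • u := hU0 u hu
    have he0v : e 0 * v = (2 : K)⁻¹ • v := hU0 v hv
    have hue0 : u * e 0 = (2 : K)⁻¹ • u := by rw [mul_comm]; exact he0u
    have hve0 : v * e 0 = (2 : K)⁻¹ • v := by rw [mul_comm]; exact he0v
    have hun : u * e tp = 0 := by rw [mul_comm]; exact hn u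
    have hvn : v * e tp = 0 := by rw [mul_comm]; exact hn v
    have he0n : e 0 * e tp = 0 := h0top
    rw [hxd, hyd]
    simp only [mul_add, add_mul, smul_mul_assoc, mul_smul_comm, h00, he0n, hn, he0u, he0v,
      hue0, hve0, hun, hvn, hα', hβ', hvu, smul_zero, add_zero, zero_add, mul_zero, zero_mul,
      smul_add, smul_smul]
    match_scalars <;> field_simp <;> ring
  · -- the weight homomorphism and the train equation
    refine ⟨e.coord 0, ?_, hc00, ?_, ?_⟩
    · intro x y
      obtain ⟨a, b, u, hu, hxd, hωx⟩ := hdec x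
      obtain ⟨c, d, v, hv, hyd, hωy⟩ := hdec y
      obtain ⟨β, hβ⟩ := Submodule.mem_span_singleton.mp (hUU u hu v hv)
      have hβ' : u * v = β • e tp := hβ.symm
      have he0u : e 0 * u = (2 : K)⁻¹ • u := hU0 u hu
      have he0v : e 0 * v = (2 : K)⁻¹ • v := hU0 v hv
      have hue0 : u * e 0 = (2 : K)⁻¹ • u := by rw [mul_comm]; exact he0u
      have hun : u * e tp = 0 := by rw [mul_comm]; exact hn u
      have hvn : v * e tp = 0 := by rw [mul_comm]; exact hn v
      rw [hωx, hωy, hxd, hyd]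
      simp only [mul_add, add_mul, smul_mul_assoc, mul_smul_comm, h00, h0top, hn, he0u, he0v,
        hue0, hun, hvn, hβ', smul_zero, add_zero, zero_add, mul_zero, zero_mul, smul_smul]
      simp only [map_add, map_smul, hc00, hc0tp, hc0U u hu, hc0U v hv, smul_eq_mul]
      ring
    · intro i h1
      have hi : i ≠ 0 := by intro h; rw [h] at h1; simp at h1
      simp [Module.Basis.coord_apply, Module.Basis.repr_self_apply, hi]
    · intro x
      obtain ⟨a, b, u, hu, hxd, hωx⟩ := hdec x
      obtain ⟨α, hα⟩ := Submodule.mem_span_singleton.mp (hUU u hu u hu)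
      have hα' : u * u = α • e tp := hα.symm
      have he0u : e 0 * u = (2 : K)⁻¹ • u := hU0 u hu
      have hue0 : u * e 0 = (2 : K)⁻¹ • u := by rw [mul_comm]; exact he0u
      have hun : u * e tp = 0 := by rw [mul_comm]; exact hn u
      rw [hωx, hxd, sub_eq_zero]
      simp only [mul_add, add_mul, smul_mul_assoc, mul_smul_comm, h00, h0top, hn, he0u,
        hue0, hun, hα', smul_zero, add_zero, zero_add, mul_zero, zero_mul, smul_add, smul_smul]
      match_scalars <;> field_simp <;> ring
end

section
/- Let A be the (2p+1)-dimensional commutative algebra over a field K of characteristic ≠ 2 with basis {e_0,…,e_{2p}} and products e_0² = e_0, e_0e_i = ½e_i (1 ≤ i ≤ 2p−1), e_0e_{2p} = e_{2p}, e_i e_{2p−i} = ½(−1)^i e_{2p} (1 ≤ i ≤ p), all other products zero. Then A is a Jordan algebra satisfying the train equation x³ − 2ω(x)x² + ω(x)²x = 0, where ω is the algebra homomorphism with ω(e_0) = 1, ω(e_i) = 0 for i ≥ 1. -/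
/-!
Let ω be the coordinate of `e 0` and `t = e (2p)`. Modulo the line `K ∙ t` the multiplication is
`x * y ≡ ½ (ω x • y + ω y • x)` (check it on basis vectors), so `x * x = ω x • x + s • t` for
some `s`, while `t * x = ω x • t`. Substituting this expression of `x * x` gives the train
equation directly, and reduces the Jordan identity to `x * (y * x) = (x * y) * x`, which holds
by commutativity, together with `ω (y * x) = ω y * ω x`. Multiplicativity of ω follows by
polarization from `ω (x * x) = ω x * ω x`, since `ω t = 0`.
-/

theorem exists_eq_add_smul_of_sub_mem_span_singleton {K M : Type*} [Field K] [AddCommGroup M]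
    [Module K M] {a b t : M} (h : a - b ∈ K ∙ t) : ∃ s : K, a = b + s • t := by
  obtain ⟨s, hs⟩ := Submodule.mem_span_singleton.1 h
  exact ⟨s, by rw [hs]; abel⟩

theorem LinearMap.apply_apply_mem_of_basis {K M N ι : Type*} [Field K] [AddCommGroup M]
    [Module K M] [AddCommGroup N] [Module K N] (b : Module.Basis ι K M)
    (B : M →ₗ[K] M →ₗ[K] N) {S : Submodule K N} (h : ∀ i j, B (b i) (b j) ∈ S) (x y : M) :
    B x y ∈ S := by
  have hB : B.compr₂ S.mkQ = 0 :=
    LinearMap.ext_basis b b fun i j => (Submodule.Quotient.mk_eq_zero S).2 (h i j)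
  exact (Submodule.Quotient.mk_eq_zero S).1 (LinearMap.congr_fun₂ hB x y)

section TrainAlgebra

variable {K A : Type*} [Field K] [NonUnitalNonAssocCommRing A] [Module K A]

theorem LinearMap.map_mul_of_map_mul_self {ω : A →ₗ[K] K} (h2 : (2 : K) ≠ 0)
    (hω : ∀ x, ω (x * x) = ω x * ω x) (x y : A) : ω (x * y) = ω x * ω y := by
  have h := hω (x + y)
  simp only [add_mul, mul_add, mul_comm y x, map_add, hω] at h
  exact mul_left_cancel₀ h2 (by linear_combination h)

variable {ω : A →ₗ[K] K} {t : A}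

theorem map_mul_self_of_mul_self_sub_mem_span (hωt : ω t = 0)
    (hsq : ∀ x, x * x - ω x • x ∈ K ∙ t) (x : A) : ω (x * x) = ω x * ω x := by
  obtain ⟨s, hs⟩ := exists_eq_add_smul_of_sub_mem_span_singleton (hsq x)
  rw [hs, map_add, map_smul, map_smul, hωt, smul_eq_mul, smul_zero, add_zero]

theorem jordan_identity_of_mul_self_sub_mem_span [IsScalarTower K A A]
    (ht : ∀ x, t * x = ω x • t) (hsq : ∀ x, x * x - ω x • x ∈ K ∙ t)
    (hω : ∀ x y, ω (x * y) = ω x * ω y) (x y : A) :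
    (x * x) * (y * x) = ((x * x) * y) * x := by
  obtain ⟨s, hs⟩ := exists_eq_add_smul_of_sub_mem_span_singleton (hsq x)
  simp only [hs, add_mul, smul_mul_assoc, ht, hω, smul_smul, mul_assoc, mul_comm x y,
    mul_comm (y * x) x]

theorem train_equation_of_mul_self_sub_mem_span [SMulCommClass K A A]
    (ht : ∀ x, t * x = ω x • t) (hsq : ∀ x, x * x - ω x • x ∈ K ∙ t) (x : A) :
    x * (x * x) - (2 * ω x) • (x * x) + (ω x * ω x) • x = 0 := by
  obtain ⟨s, hs⟩ := exists_eq_add_smul_of_sub_mem_span_singleton (hsq x)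
  have hcube : x * (x * x) = ω x • (x * x) + (ω x * s) • t := by
    conv_lhs => rw [hs]
    rw [mul_add, mul_smul_comm, mul_smul_comm, mul_comm x t, ht, smul_smul, mul_comm s]
  rw [hcube, hs]
  module

theorem Module.Basis.mul_self_sub_coord_smul_mem [SMulCommClass K A A] [IsScalarTower K A A]
    {ι : Type*} (b : Basis ι K A) (h2 : (2 : K) ≠ 0) (i₀ : ι) {S : Submodule K A}
    (hidem : b i₀ * b i₀ = b i₀) (hhalf : ∀ j, j ≠ i₀ → b i₀ * b j - (2 : K)⁻¹ • b j ∈ S)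
    (hmul : ∀ i j, i ≠ i₀ → j ≠ i₀ → b i * b j ∈ S) (x : A) :
    x * x - b.coord i₀ x • x ∈ S := by
  let ω := b.coord i₀
  let B : A →ₗ[K] A →ₗ[K] A :=
    (2 : K) • LinearMap.mul K A - ω.smulRight LinearMap.id - (ω.smulRight LinearMap.id).flip
  have hB : ∀ x y, B x y = (2 : K) • (x * y) - ω x • y - ω y • x := fun _ _ => rfl
  have hω₀ : ω (b i₀) = 1 := by simp [ω]
  have hω : ∀ j, i₀ ≠ j → ω (b j) = 0 := fun j hj => by simp [ω, hj.symm]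
  have hhalf₂ : ∀ j, i₀ ≠ j → (2 : K) • (b i₀ * b j) - b j ∈ S := fun j hj => by
    simpa [smul_sub, smul_smul, h2] using S.smul_mem 2 (hhalf j hj.symm)
  have hbasis : ∀ i j, B (b i) (b j) ∈ S := by
    intro i j
    rw [hB]
    obtain rfl | hi := eq_or_ne i₀ i <;> obtain rfl | hj := eq_or_ne i₀ j
    · rw [hidem, hω₀, one_smul, sub_sub, ← two_smul K, sub_self]
      exact S.zero_mem
    · simpa [hω₀, hω j hj] using hhalf₂ j hj
    · simpa [hω₀, hω i hi, mul_comm (b i)] using hhalf₂ i hi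
    · simpa [hω i hi, hω j hj] using S.smul_mem 2 (hmul i j hi.symm hj.symm)
  have hxx := LinearMap.apply_apply_mem_of_basis b B hbasis x x
  rw [hB, sub_sub, ← two_smul K (ω x • x), ← smul_sub] at hxx
  exact (Submodule.smul_mem_iff S h2).1 hxx

end TrainAlgebra

theorem Fin.one_le_val_of_ne_zero {n : ℕ} {i : Fin (n + 1)} (hi : i ≠ 0) : 1 ≤ (i : ℕ) :=
  Nat.one_le_iff_ne_zero.2 (Fin.val_ne_zero_iff.2 hi)

section Rank3TrainJordan

variable {K A : Type*} [Field K] [NonUnitalNonAssocCommRing A] [Module K A] {p : ℕ}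
  {e : Module.Basis (Fin (2 * p + 1)) K A}

theorem basis_mul_mem_span_last
    (hpair : ∀ i j : Fin (2 * p + 1), 1 ≤ (i : ℕ) → 1 ≤ (j : ℕ) →
      (i : ℕ) + (j : ℕ) = 2 * p →
      e i * e j = ((2 : K)⁻¹ * (-1 : K) ^ (i : ℕ)) • e ⟨2 * p, Nat.lt_succ_self _⟩)
    (hzero : ∀ i j : Fin (2 * p + 1), 1 ≤ (i : ℕ) → 1 ≤ (j : ℕ) →
      (i : ℕ) + (j : ℕ) ≠ 2 * p → e i * e j = 0)
    {i j : Fin (2 * p + 1)} (hi : i ≠ 0) (hj : j ≠ 0) :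
    e i * e j ∈ K ∙ e (Fin.last (2 * p)) := by
  by_cases hij : (i : ℕ) + (j : ℕ) = 2 * p
  · rw [hpair i j (Fin.one_le_val_of_ne_zero hi) (Fin.one_le_val_of_ne_zero hj) hij]
    exact Submodule.smul_mem _ _ (Submodule.mem_span_singleton_self _)
  · rw [hzero i j (Fin.one_le_val_of_ne_zero hi) (Fin.one_le_val_of_ne_zero hj) hij]
    exact Submodule.zero_mem _

theorem basis_zero_mul_sub_half_smul_mem_span_last
    (h0i : ∀ i : Fin (2 * p + 1), 1 ≤ (i : ℕ) → (i : ℕ) ≤ 2 * p - 1 →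
      e 0 * e i = (2 : K)⁻¹ • e i)
    (h0top : e 0 * e ⟨2 * p, Nat.lt_succ_self _⟩ = e ⟨2 * p, Nat.lt_succ_self _⟩)
    {j : Fin (2 * p + 1)} (hj : j ≠ 0) :
    e 0 * e j - (2 : K)⁻¹ • e j ∈ K ∙ e (Fin.last (2 * p)) := by
  obtain rfl | hjl := eq_or_ne j (Fin.last (2 * p))
  · rw [show e 0 * e (Fin.last (2 * p)) = _ from h0top]
    exact Submodule.sub_mem _ (Submodule.mem_span_singleton_self _)
      (Submodule.smul_mem _ _ (Submodule.mem_span_singleton_self _))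
  · have hjle : (j : ℕ) ≤ 2 * p - 1 := by
      have := Fin.val_ne_iff.2 hjl
      simp only [Fin.val_last] at this
      omega
    rw [h0i j (Fin.one_le_val_of_ne_zero hj) hjle, sub_self]
    exact Submodule.zero_mem _

theorem basis_last_mul [SMulCommClass K A A] [IsScalarTower K A A] (hp : 1 ≤ p)
    (h0top : e 0 * e ⟨2 * p, Nat.lt_succ_self _⟩ = e ⟨2 * p, Nat.lt_succ_self _⟩)
    (hzero : ∀ i j : Fin (2 * p + 1), 1 ≤ (i : ℕ) → 1 ≤ (j : ℕ) →
      (i : ℕ) + (j : ℕ) ≠ 2 * p → e i * e j = 0) (x : A) :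
    e (Fin.last (2 * p)) * x = e.coord 0 x • e (Fin.last (2 * p)) := by
  suffices LinearMap.mulLeft K (e (Fin.last (2 * p))) =
      (e.coord 0).smulRight (e (Fin.last (2 * p))) from LinearMap.congr_fun this x
  refine e.ext fun i => ?_
  obtain rfl | hi := eq_or_ne i 0
  · have h : e 0 * e (Fin.last (2 * p)) = e (Fin.last (2 * p)) := h0top
    simp only [LinearMap.mulLeft_apply, LinearMap.smulRight_apply, Module.Basis.coord_apply,
      Module.Basis.repr_self, Finsupp.single_eq_same, one_smul]
    rw [mul_comm, h]
  · have hlast : (Fin.last (2 * p) : ℕ) = 2 * p := Fin.val_last _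
    have hi₁ := Fin.one_le_val_of_ne_zero hi
    simp only [LinearMap.mulLeft_apply, LinearMap.smulRight_apply, Module.Basis.coord_apply,
      Module.Basis.repr_self, Finsupp.single_eq_of_ne' hi, zero_smul]
    exact hzero _ i (by omega) hi₁ (by omega)

end Rank3TrainJordan

/-- The (2p+1)-dimensional algebra with e_0² = e_0, e_0e_i = ½e_i (1 ≤ i ≤ 2p−1),
e_0e_{2p} = e_{2p}, e_ie_{2p−i} = ½(−1)^i e_{2p} (1 ≤ i ≤ p) and all other products
zero is a Jordan algebra satisfying the train equation x³ − 2ω(x)x² + ω(x)²x = 0,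
where ω is the weight homomorphism with ω(e_0) = 1, ω(e_i) = 0 for i ≥ 1. -/
theorem rank3_train_jordan {K A : Type*} [Field K]
    [NonUnitalNonAssocCommRing A] [Module K A] [SMulCommClass K A A] [IsScalarTower K A A]
    (h2 : (2 : K) ≠ 0) (p : ℕ) (hp : 1 ≤ p)
    (e : Module.Basis (Fin (2 * p + 1)) K A)
    (h00 : e 0 * e 0 = e 0)
    (h0i : ∀ i : Fin (2 * p + 1), 1 ≤ (i : ℕ) → (i : ℕ) ≤ 2 * p - 1 →
      e 0 * e i = (2 : K)⁻¹ • e i)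
    (h0top : e 0 * e ⟨2 * p, Nat.lt_succ_self _⟩ = e ⟨2 * p, Nat.lt_succ_self _⟩)
    (hpair : ∀ i j : Fin (2 * p + 1), 1 ≤ (i : ℕ) → 1 ≤ (j : ℕ) →
      (i : ℕ) + (j : ℕ) = 2 * p →
      e i * e j = ((2 : K)⁻¹ * (-1 : K) ^ (i : ℕ)) • e ⟨2 * p, Nat.lt_succ_self _⟩)
    (hzero : ∀ i j : Fin (2 * p + 1), 1 ≤ (i : ℕ) → 1 ≤ (j : ℕ) →
      (i : ℕ) + (j : ℕ) ≠ 2 * p → e i * e j = 0) :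
    (∀ x y : A, (x * x) * (y * x) = ((x * x) * y) * x) ∧
    ∃ ω : A →ₗ[K] K, (∀ x y : A, ω (x * y) = ω x * ω y) ∧ ω (e 0) = 1 ∧
      (∀ i : Fin (2 * p + 1), 1 ≤ (i : ℕ) → ω (e i) = 0) ∧
      ∀ x : A, x * (x * x) - (2 * ω x) • (x * x) + (ω x * ω x) • x = 0 := by
  have hlast : Fin.last (2 * p) ≠ 0 :=
    Fin.ne_of_val_ne (by rw [Fin.val_last, Fin.val_zero]; omega)
  have hωt : e.coord 0 (e (Fin.last (2 * p))) = 0 := by simp [hlast]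
  have hsq := e.mul_self_sub_coord_smul_mem h2 0 h00
    (fun _ hj => basis_zero_mul_sub_half_smul_mem_span_last h0i h0top hj)
    (fun _ _ hi hj => basis_mul_mem_span_last hpair hzero hi hj)
  have ht := basis_last_mul hp h0top hzero
  have hmul :=
    LinearMap.map_mul_of_map_mul_self h2 (map_mul_self_of_mul_self_sub_mem_span hωt hsq)
  refine ⟨jordan_identity_of_mul_self_sub_mem_span ht hsq hmul, e.coord 0, hmul, by simp,
    fun i hi => ?_, train_equation_of_mul_self_sub_mem_span ht hsq⟩
  have hi₀ : i ≠ 0 := fun h => by simp [h] at hi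
  simp [hi₀]
end

section
/- Let A be the (n+1)-dimensional commutative algebra with basis {e_0,…,e_n}, products e_0² = e_0 + e_n, e_0e_i = ½e_i (1 ≤ i ≤ n), all other products zero, over a field of characteristic ≠ 2. Then A is a Lie triple algebra satisfying the train equation x³ − (3/2)ω(x)x² + (1/2)ω(x)²x = 0, where ω is the algebra homomorphism with ω(e_0) = 1, ω(e_i) = 0 for i ≥ 1, and A is not a Jordan algebra. -/
/-!
With `ω` the `0`-th coordinate and `z = e_n`, the multiplication table says exactly
`x * y = ω x ω y • z + ½ ω x • y + ½ ω y • x` with `ω z = 0`: both sides are bilinear and agree on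
pairs of basis vectors. In such an algebra `ω` is multiplicative, and every product of `x`'s and
`y`'s is a combination of `x`, `y`, `z` whose coefficients are polynomials in `ω x`, `ω y`; so the
Lie triple identity and the train equation reduce to identities between these coefficients.
The same computation gives `(x²)² - (x² x) x = ¼ (ω x)⁴ z`, which is non-zero at `x = e_0`.
-/

section

variable {K A : Type*} [Field K] [NonUnitalNonAssocCommRing A] [Module K A]

structure IsPseudoGameticMul (ω : A →ₗ[K] K) (z : A) : Prop where
  weight_eq_zero : ω z = 0
  mul_eq : ∀ x y : A, x * y = (ω x * ω y) • z + ((2 : K)⁻¹ * ω x) • y + ((2 : K)⁻¹ * ω y) • x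

namespace IsPseudoGameticMul

variable {ω : A →ₗ[K] K} {z : A}

theorem weight_mul (h2 : (2 : K) ≠ 0) (hA : IsPseudoGameticMul ω z) (x y : A) :
    ω (x * y) = ω x * ω y := by
  simp only [hA.mul_eq, map_add, map_smul, hA.weight_eq_zero, smul_eq_mul]
  field_simp
  ring

theorem lie_triple_identity (h2 : (2 : K) ≠ 0) (hA : IsPseudoGameticMul ω z) (x y : A) :
    2 • (x * (x * (x * y))) + y * (x * (x * x)) = 3 • (x * (y * (x * x))) := by
  simp only [hA.mul_eq, map_add, map_smul, hA.weight_eq_zero, smul_eq_mul]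
  match_scalars <;> field_simp <;> ring

theorem train_identity (h2 : (2 : K) ≠ 0) (hA : IsPseudoGameticMul ω z) (x : A) :
    x * (x * x) - ((3 : K) * (2 : K)⁻¹ * ω x) • (x * x) + ((2 : K)⁻¹ * (ω x * ω x)) • x = 0 := by
  simp only [hA.mul_eq, map_add, map_smul, hA.weight_eq_zero, smul_eq_mul]
  match_scalars <;> field_simp <;> ring

theorem jordan_defect (h2 : (2 : K) ≠ 0) (hA : IsPseudoGameticMul ω z) (x : A) :
    (x * x) * (x * x) - ((x * x) * x) * x = ((2 : K)⁻¹ ^ 2 * ω x ^ 4) • z := by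
  simp only [hA.mul_eq, map_add, map_smul, hA.weight_eq_zero, smul_eq_mul]
  match_scalars <;> field_simp <;> ring

theorem not_jordan (h2 : (2 : K) ≠ 0) (hA : IsPseudoGameticMul ω z) (hω : ω ≠ 0) (hz : z ≠ 0) :
    ¬∀ x y : A, (x * x) * (y * x) = ((x * x) * y) * x := by
  intro hJordan
  obtain ⟨x, hx⟩ := DFunLike.ne_iff.mp hω
  rw [LinearMap.zero_apply] at hx
  have hdefect := hA.jordan_defect h2 x
  rw [hJordan x x, sub_self, eq_comm, smul_eq_zero] at hdefect
  exact hdefect.elim (by positivity) hz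

end IsPseudoGameticMul

theorem isPseudoGameticMul_of_basis [SMulCommClass K A A] [IsScalarTower K A A]
    (h2 : (2 : K) ≠ 0) {n : ℕ} (hn : 1 ≤ n) (e : Module.Basis (Fin (n + 1)) K A)
    (h00 : e 0 * e 0 = e 0 + e (Fin.last n))
    (h0i : ∀ i : Fin (n + 1), 1 ≤ (i : ℕ) → e 0 * e i = (2 : K)⁻¹ • e i)
    (hij : ∀ i j : Fin (n + 1), 1 ≤ (i : ℕ) → 1 ≤ (j : ℕ) → e i * e j = 0) :
    IsPseudoGameticMul (e.coord 0) (e (Fin.last n)) := by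
  set ω := e.coord 0
  have hω0 : ω (e 0) = 1 := by simp [ω]
  have hω : ∀ i : Fin n, ω (e i.succ) = 0 := fun i => by simp [ω, Fin.succ_ne_zero]
  have hωz : ω (e (Fin.last n)) = 0 := by
    simp [ω, Finsupp.single_apply, Fin.ext_iff]
    omega
  refine ⟨hωz, fun x y => ?_⟩
  let B : A →ₗ[K] A →ₗ[K] A := LinearMap.mk₂ K
    (fun x y => (ω x * ω y) • e (Fin.last n) + ((2 : K)⁻¹ * ω x) • y + ((2 : K)⁻¹ * ω y) • x)
    (by intros; simp only [map_add]; module)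
    (by intros; simp only [map_smul, smul_eq_mul]; module)
    (by intros; simp only [map_add]; module)
    (by intros; simp only [map_smul, smul_eq_mul]; module)
  suffices LinearMap.mul K A = B from LinearMap.congr_fun₂ this x y
  refine LinearMap.ext_basis e e fun i j => ?_
  simp only [LinearMap.mul_apply', B, LinearMap.mk₂_apply]
  induction i using Fin.cases <;> induction j using Fin.cases
  · rw [h00, hω0]
    match_scalars <;> grind
  · rw [h0i _ (Fin.succ_pos _), hω0, hω]
    simp
  · rw [mul_comm, h0i _ (Fin.succ_pos _), hω0, hω]
    simp
  · rw [hij _ _ (Fin.succ_pos _) (Fin.succ_pos _), hω, hω]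
    simp

end

/-- The (n+1)-dimensional algebra with e_0² = e_0 + e_n, e_0e_i = ½e_i (1 ≤ i ≤ n)
and all other products zero is a Lie triple algebra satisfying the train equation
x³ − (3/2)ω(x)x² + (1/2)ω(x)²x = 0 (ω the weight homomorphism with ω(e_0) = 1,
ω(e_i) = 0 for i ≥ 1), and it is not a Jordan algebra. -/
theorem pseudo_gametic_train_not_jordan {K A : Type*} [Field K]
    [NonUnitalNonAssocCommRing A] [Module K A] [SMulCommClass K A A] [IsScalarTower K A A]
    (h2 : (2 : K) ≠ 0) (n : ℕ) (hn : 1 ≤ n)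
    (e : Module.Basis (Fin (n + 1)) K A)
    (h00 : e 0 * e 0 = e 0 + e ⟨n, Nat.lt_succ_self n⟩)
    (h0i : ∀ i : Fin (n + 1), 1 ≤ (i : ℕ) → e 0 * e i = (2 : K)⁻¹ • e i)
    (hij : ∀ i j : Fin (n + 1), 1 ≤ (i : ℕ) → 1 ≤ (j : ℕ) → e i * e j = 0) :
    (∀ x y : A, 2 • (x * (x * (x * y))) + y * (x * (x * x)) = 3 • (x * (y * (x * x)))) ∧
    (∃ ω : A →ₗ[K] K, (∀ x y : A, ω (x * y) = ω x * ω y) ∧ ω (e 0) = 1 ∧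
      (∀ i : Fin (n + 1), 1 ≤ (i : ℕ) → ω (e i) = 0) ∧
      ∀ x : A, x * (x * x) - ((3 : K) * (2 : K)⁻¹ * ω x) • (x * x)
        + ((2 : K)⁻¹ * (ω x * ω x)) • x = 0) ∧
    ¬(∀ x y : A, (x * x) * (y * x) = ((x * x) * y) * x) := by
  have hA := isPseudoGameticMul_of_basis h2 hn e h00 h0i hij
  have hω0 : e.coord 0 (e 0) = 1 := by simp
  refine ⟨hA.lie_triple_identity h2,
    ⟨e.coord 0, hA.weight_mul h2, hω0, fun i hi => ?_, hA.train_identity h2⟩,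
    hA.not_jordan h2 (fun hω => by simp [hω] at hω0) (e.ne_zero _)⟩
  have : i ≠ 0 := by rintro rfl; simp at hi
  simp [this]
end
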